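/- arXiv:2512.16210 — 11 statements merged into one kernel-verified Lean document; each statement's English description precedes it below -/
import Mathlib

section
/- Let α > β > γ > 0 be reals and let E = {(x,y,z) ∈ ℝ³ : x²/α + y²/β + z²/γ = 1}. Fix a sign ε ∈ {1,−1} and μ ∈ ℝ with μ² < (α−γ)/β, and let Π = {(x,y,z) ∈ ℝ³ : √(1/β − 1/α)·x + ε·√(1/γ − 1/β)·z = μ}. Then the intersection E ∩ Π is a circle of positive radius: there exist a point c ∈ Π and a real R > 0 such that E ∩ Π = {p ∈ Π : ‖p − c‖ = R}. -/
open Real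

/-!
Put `a = √(1/β - 1/α)` and `b = ε √(1/γ - 1/β)`, so that `1/α = 1/β - a²` and `1/γ = 1/β + b²`.
Then `x²/α + y²/β + z²/γ = (x² + y² + z²)/β - (a x - b z)(a x + b z)`, and on `Π` the factor
`a x + b z` is the constant `μ`: there the quadric equation becomes the equation of a sphere.
Completing the square modulo the plane equation, with `κ = μβ/(α - γ)` and `c = κ (α a, 0, γ b) ∈ Π`,
gives `β (x²/α + y²/β + z²/γ - 1) = ‖p - c‖² - (β - κ² (α - γ))` for `p ∈ Π`, and the bound on `μ²`
says exactly that `β - κ² (α - γ) > 0`.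
-/

lemma inter_eq_sphere_of_sq_norm_sub_sub_sq_eq {V : Type*} [NormedAddCommGroup V] {P : Set V}
    {f : V → ℝ} {c : V} {R k : ℝ} (hR : 0 ≤ R) (hk : k ≠ 0)
    (h : ∀ p ∈ P, ‖p - c‖ ^ 2 - R ^ 2 = k * (f p - 1)) :
    {p | f p = 1} ∩ P = {p ∈ P | ‖p - c‖ = R} := by
  ext p
  simp only [Set.mem_inter_iff, Set.mem_ofPred_eq]
  refine and_comm.trans (and_congr_right fun hp => ?_)
  rw [← sq_eq_sq₀ (norm_nonneg _) hR, ← sub_eq_zero (a := ‖p - c‖ ^ 2), h p hp, mul_eq_zero,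
    or_iff_right hk, sub_eq_zero]

namespace CircularSection

variable {α β γ a b κ μ : ℝ}

lemma sphere_sub_eq_mul_ellipsoid_sub_of_mem_plane {x y z : ℝ} (hα : α ≠ 0) (hβ : β ≠ 0)
    (hγ : γ ≠ 0) (ha : α * β * a ^ 2 = α - β) (hb : β * γ * b ^ 2 = β - γ)
    (hκ : κ * (α - γ) = μ * β) (hplane : a * x + b * z = μ) :
    (x - κ * α * a) ^ 2 + y ^ 2 + (z - κ * γ * b) ^ 2 - (β - κ ^ 2 * (α - γ))
      = β * (x ^ 2 / α + y ^ 2 / β + z ^ 2 / γ - 1) := by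
  field_simp
  apply mul_left_cancel₀ hβ
  linear_combination (-β * γ * x ^ 2 + α ^ 2 * γ * κ ^ 2) * ha
    + (α * β * z ^ 2 + α * γ ^ 2 * κ ^ 2) * hb
    + (α * β ^ 2 * γ * (a * x - b * z) - α * β * γ * κ * (α + γ)) * hplane
    + (-α * β * γ * (a * x - b * z) + α * γ * κ * (α + γ)) * hκ

lemma center_mem_plane (hβ : β ≠ 0) (ha : α * β * a ^ 2 = α - β) (hb : β * γ * b ^ 2 = β - γ)
    (hκ : κ * (α - γ) = μ * β) :
    a * (κ * α * a) + b * (κ * γ * b) = μ := by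
  apply mul_left_cancel₀ hβ
  linear_combination κ * ha + κ * hb + hκ

lemma radius_sq_pos (hβ : 0 < β) (hαγ : γ < α) (hκ : κ * (α - γ) = μ * β)
    (hμ : μ ^ 2 < (α - γ) / β) :
    0 < β - κ ^ 2 * (α - γ) := by
  have hαγ' : 0 < α - γ := sub_pos.2 hαγ
  have hμβ : μ ^ 2 * β < α - γ := (lt_div_iff₀ hβ).1 hμ
  have h : κ ^ 2 * (α - γ) * (α - γ) < β * (α - γ) := by
    calc κ ^ 2 * (α - γ) * (α - γ) = μ ^ 2 * β * β := by
          linear_combination (κ * (α - γ) + μ * β) * hκ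
      _ < (α - γ) * β := mul_lt_mul_of_pos_right hμβ hβ
      _ = β * (α - γ) := mul_comm _ _
  linarith [lt_of_mul_lt_mul_right h hαγ'.le]

end CircularSection

theorem circular_cross_section_is_circle
    (α β γ : ℝ) (hαβ : β < α) (hβγ : γ < β) (hγ : 0 < γ)
    (ε : ℝ) (hε : ε = 1 ∨ ε = -1)
    (μ : ℝ) (hμ : μ ^ 2 < (α - γ) / β)
    (E P : Set (EuclideanSpace ℝ (Fin 3)))
    (hE : E = {p | (p 0) ^ 2 / α + (p 1) ^ 2 / β + (p 2) ^ 2 / γ = 1})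
    (hP : P = {p | Real.sqrt (1 / β - 1 / α) * p 0
        + ε * Real.sqrt (1 / γ - 1 / β) * p 2 = μ}) :
    ∃ c ∈ P, ∃ R : ℝ, 0 < R ∧ E ∩ P = {p ∈ P | ‖p - c‖ = R} := by
  have hβ : 0 < β := hγ.trans hβγ
  have hα : 0 < α := hβ.trans hαβ
  set a := √(1 / β - 1 / α)
  set b := ε * √(1 / γ - 1 / β)
  have ha : α * β * a ^ 2 = α - β := by
    rw [sq_sqrt (sub_nonneg.2 (one_div_le_one_div_of_le hβ hαβ.le))]
    field_simp
  have hb : β * γ * b ^ 2 = β - γ := by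
    have hε2 : ε ^ 2 = 1 := by rcases hε with rfl | rfl <;> norm_num
    rw [mul_pow, hε2, one_mul, sq_sqrt (sub_nonneg.2 (one_div_le_one_div_of_le hγ hβγ.le))]
    field_simp
  set κ := μ * β / (α - γ)
  have hκ : κ * (α - γ) = μ * β := div_mul_cancel₀ _ (sub_pos.2 (hβγ.trans hαβ)).ne'
  have hR := CircularSection.radius_sq_pos hβ (hβγ.trans hαβ) hκ hμ
  refine ⟨!₂[κ * α * a, 0, κ * γ * b], ?_, √(β - κ ^ 2 * (α - γ)), sqrt_pos.2 hR, ?_⟩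
  · simpa [hP] using CircularSection.center_mem_plane hβ.ne' ha hb hκ
  rw [hE]
  refine inter_eq_sphere_of_sq_norm_sub_sub_sq_eq (sqrt_nonneg _) hβ.ne' fun p hp => ?_
  rw [hP] at hp
  rw [EuclideanSpace.real_norm_sq_eq, sq_sqrt hR.le]
  simpa [Fin.sum_univ_three] using CircularSection.sphere_sub_eq_mul_ellipsoid_sub_of_mem_plane
    (y := p 1) hα.ne' hβ.ne' hγ.ne' ha hb hκ hp
end

section
/- Let α > β > γ > 0 be reals and let σ₁, σ₃ > 0 satisfy α(β−γ)σ₁² + γ(α−β)σ₃² = β(α−γ). Let A : ℝ³ → ℝ³ be the linear map A(x,y,z) = (σ₁x, y, σ₃z). Then A is isometric on each plane of the two families containing the circular cross sections of the ellipsoid E: for every sign ε ∈ {1,−1} and all points p = (p₁,p₂,p₃), q = (q₁,q₂,q₃) ∈ ℝ³ with √(1/β − 1/α)·(p₁ − q₁) + ε·√(1/γ − 1/β)·(p₃ − q₃) = 0 (i.e. p and q lie in one common plane Π_ε(μ)), one has ‖A p − A q‖ = ‖p − q‖. -/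
open Real

noncomputable def pt (x y z : ℝ) : EuclideanSpace ℝ (Fin 3) :=
  (WithLp.equiv 2 (Fin 3 → ℝ)).symm ![x, y, z]

/-!
Squaring the plane equation shows that a direction `(Δx, Δy, Δz)` of `Π_ε(μ)` satisfies
`γ (α - β) Δx² = α (β - γ) Δz²`, independently of the sign `ε`. Since `β (α - γ)` is the sum
`α (β - γ) + γ (α - β)`, the constraint on `σ₁, σ₃` says `α (β - γ) (σ₁² - 1) = γ (α - β) (1 - σ₃²)`,
and combining the two relations gives `σ₁² Δx² + σ₃² Δz² = Δx² + Δz²`.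
-/

lemma pt_sub_pt (x y z x' y' z' : ℝ) :
    pt x y z - pt x' y' z' = pt (x - x') (y - y') (z - z') := by
  ext i
  fin_cases i <;> simp [pt]

lemma norm_pt_sq (x y z : ℝ) : ‖pt x y z‖ ^ 2 = x ^ 2 + y ^ 2 + z ^ 2 := by
  simp [pt, EuclideanSpace.norm_sq_eq, Fin.sum_univ_three]

lemma norm_sq_eq_fin_three (p : EuclideanSpace ℝ (Fin 3)) :
    ‖p‖ ^ 2 = p 0 ^ 2 + p 1 ^ 2 + p 2 ^ 2 := by
  simp [EuclideanSpace.norm_sq_eq, Fin.sum_univ_three]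

lemma mul_sq_eq_of_sqrt_mul_add_sign_mul_eq_zero {a b ε u v : ℝ} (ha : 0 ≤ a) (hb : 0 ≤ b)
    (hε : ε ^ 2 = 1) (h : √a * u + ε * √b * v = 0) : a * u ^ 2 = b * v ^ 2 := by
  calc a * u ^ 2 = (√a * u) ^ 2 := by rw [mul_pow, sq_sqrt ha]
    _ = ε ^ 2 * (√b ^ 2 * v ^ 2) := by rw [eq_neg_of_add_eq_zero_left h]; ring
    _ = b * v ^ 2 := by rw [hε, one_mul, sq_sqrt hb]

lemma mul_add_mul_eq_add_of_weighted {a b s t u v : ℝ} (ha : a ≠ 0)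
    (hst : a * s + b * t = a + b) (huv : b * u = a * v) : s * u + t * v = u + v := by
  apply mul_left_cancel₀ ha
  linear_combination u * hst + (1 - t) * huv

theorem affine_map_isometric_on_circular_planes_general
    (α β γ : ℝ) (hαβ : β < α) (hβγ : γ < β) (hγ : 0 < γ)
    (σ₁ σ₃ : ℝ)
    (hconstr : α * (β - γ) * σ₁ ^ 2 + γ * (α - β) * σ₃ ^ 2 = β * (α - γ))
    (ε : ℝ) (hε : ε = 1 ∨ ε = -1)
    (p q : EuclideanSpace ℝ (Fin 3))
    (hpq : Real.sqrt (1 / β - 1 / α) * (p 0 - q 0)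
        + ε * Real.sqrt (1 / γ - 1 / β) * (p 2 - q 2) = 0) :
    ‖pt (σ₁ * p 0) (p 1) (σ₃ * p 2) - pt (σ₁ * q 0) (q 1) (σ₃ * q 2)‖
      = ‖p - q‖ := by
  have hβ : 0 < β := hγ.trans hβγ
  have hα : 0 < α := hβ.trans hαβ
  have hplane := mul_sq_eq_of_sqrt_mul_add_sign_mul_eq_zero
    (sub_nonneg.2 (one_div_le_one_div_of_le hβ hαβ.le))
    (sub_nonneg.2 (one_div_le_one_div_of_le hγ hβγ.le))
    (by rcases hε with rfl | rfl <;> norm_num) hpq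
  have hdir : γ * (α - β) * (p 0 - q 0) ^ 2 = α * (β - γ) * (p 2 - q 2) ^ 2 := by
    field_simp at hplane
    linear_combination hplane
  have hiso := mul_add_mul_eq_add_of_weighted (s := σ₁ ^ 2) (t := σ₃ ^ 2)
    (mul_pos hα (sub_pos.2 hβγ)).ne' (by linear_combination hconstr) hdir
  rw [pt_sub_pt, ← sq_eq_sq₀ (norm_nonneg _) (norm_nonneg _), norm_pt_sq, norm_sq_eq_fin_three]
  simp only [PiLp.sub_apply]
  linear_combination hiso

theorem affine_map_isometric_on_circular_planes
    (α β γ : ℝ) (hαβ : β < α) (hβγ : γ < β) (hγ : 0 < γ)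
    (σ₁ σ₃ : ℝ) (hσ₁ : 0 < σ₁) (hσ₃ : 0 < σ₃)
    (hconstr : α * (β - γ) * σ₁ ^ 2 + γ * (α - β) * σ₃ ^ 2 = β * (α - γ))
    (ε : ℝ) (hε : ε = 1 ∨ ε = -1)
    (p q : EuclideanSpace ℝ (Fin 3))
    (hpq : Real.sqrt (1 / β - 1 / α) * (p 0 - q 0)
        + ε * Real.sqrt (1 / γ - 1 / β) * (p 2 - q 2) = 0) :
    ‖pt (σ₁ * p 0) (p 1) (σ₃ * p 2) - pt (σ₁ * q 0) (q 1) (σ₃ * q 2)‖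
      = ‖p - q‖ :=
  affine_map_isometric_on_circular_planes_general α β γ hαβ hβγ hγ σ₁ σ₃ hconstr ε hε p q hpq
end

section
/- Let a > b > c > 0 be reals, set s₁⁰ = arcsin(√((a−b)/(a−c))), s₂⁰ = arccos(√((a−b)/(a−c))), and for s₃ ∈ ℝ define r(s₁,s₂,s₃) = (x,y,z) ∈ ℝ³ by x = ((a−c)/√((a−b)(b−c)))·sin s₁·cos s₂·cos s₃, y = (1/√(b−c))·√(1 − ((a−c)/(a−b))·sin²s₁)·√(((a−c)/(a−b))·cos²s₂ − 1), z = ((a−c)/√((a−b)(b−c)))·cos s₁·sin s₂·sin s₃. Fix a sign ε ∈ {1,−1}. Then for all s₃, s₃' ∈ ℝ and all (s₁,s₂), (t₁,t₂) ∈ [−s₁⁰,s₁⁰] × [−s₂⁰,s₂⁰] with s₁ + ε·s₂ = t₁ + ε·t₂, one has ‖r(s₁,s₂,s₃) − r(t₁,t₂,s₃)‖ = ‖r(s₁,s₂,s₃') − r(t₁,t₂,s₃')‖. That is, as s₃ varies the circular cross-section curves s₁ + ε·s₂ = const are deformed isometrically (corresponding circles are congruent). -/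
open Real

/-!
The `y`-coordinate of `r` does not involve `s₃`, and the differences of the `x`- and
`z`-coordinates are `K A cos s₃` and `K B sin s₃`, where `K = (a - c) / √((a - b) (b - c))`,
`A = sin s₁ cos s₂ - sin t₁ cos t₂` and
`B = cos s₁ sin s₂ - cos t₁ sin t₂`. For `ε = ±1` the addition formula gives
`A + ε B = sin (s₁ + ε s₂) - sin (t₁ + ε t₂) = 0`, so `A² = B²` and the squared distance
`K² (A² cos² s₃ + B² sin² s₃) = K² A²` does not depend on `s₃`.
-/

lemma norm_pt_sub (x y z x' y' z' : ℝ) :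
    ‖pt x y z - pt x' y' z'‖ = √((x - x') ^ 2 + (y - y') ^ 2 + (z - z') ^ 2) := by
  have h : pt x y z - pt x' y' z' = pt (x - x') (y - y') (z - z') := by
    simp only [pt, WithLp.equiv_symm_apply, ← WithLp.toLp_sub]
    congr 1
    ext i
    fin_cases i <;> simp
  rw [h, EuclideanSpace.norm_eq, Fin.sum_univ_three]
  simp [pt, sq_abs]

lemma sin_add_sign_mul {ε : ℝ} (hε : ε = 1 ∨ ε = -1) (x y : ℝ) :
    sin (x + ε * y) = sin x * cos y + ε * (cos x * sin y) := by
  rcases hε with rfl | rfl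
  · simp [sin_add]
  · simp [← sub_eq_add_neg, sin_sub]

lemma sq_sin_mul_cos_sub_eq_of_add_sign_mul_eq {ε : ℝ} (hε : ε = 1 ∨ ε = -1)
    {s₁ s₂ t₁ t₂ : ℝ} (h : s₁ + ε * s₂ = t₁ + ε * t₂) :
    (sin s₁ * cos s₂ - sin t₁ * cos t₂) ^ 2 = (cos s₁ * sin s₂ - cos t₁ * sin t₂) ^ 2 := by
  have hsin := congrArg sin h
  rw [sin_add_sign_mul hε, sin_add_sign_mul hε] at hsin
  have hε2 : ε ^ 2 = 1 := by rcases hε with rfl | rfl <;> norm_num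
  linear_combination
    (sin s₁ * cos s₂ - sin t₁ * cos t₂ - ε * (cos s₁ * sin s₂ - cos t₁ * sin t₂)) * hsin
      + (cos s₁ * sin s₂ - cos t₁ * sin t₂) ^ 2 * hε2

lemma sq_mul_cos_add_sq_mul_sin_of_sq_eq {p q : ℝ} (h : p ^ 2 = q ^ 2) (u : ℝ) :
    (p * cos u) ^ 2 + (q * sin u) ^ 2 = p ^ 2 := by
  linear_combination sin u ^ 2 * h.symm + p ^ 2 * sin_sq_add_cos_sq u

theorem circular_cross_sections_deformed_isometrically_general
    (a b c : ℝ)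
    (r : ℝ → ℝ → ℝ → EuclideanSpace ℝ (Fin 3))
    (hr : ∀ s₁ s₂ s₃ : ℝ, r s₁ s₂ s₃ =
      pt (((a - c) / Real.sqrt ((a - b) * (b - c)))
            * Real.sin s₁ * Real.cos s₂ * Real.cos s₃)
        ((1 / Real.sqrt (b - c))
            * Real.sqrt (1 - ((a - c) / (a - b)) * Real.sin s₁ ^ 2)
            * Real.sqrt (((a - c) / (a - b)) * Real.cos s₂ ^ 2 - 1))
        (((a - c) / Real.sqrt ((a - b) * (b - c)))
            * Real.cos s₁ * Real.sin s₂ * Real.sin s₃))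
    (ε : ℝ) (hε : ε = 1 ∨ ε = -1)
    (s₃ s₃' : ℝ) (s₁ s₂ t₁ t₂ : ℝ)
    (hdiag : s₁ + ε * s₂ = t₁ + ε * t₂) :
    ‖r s₁ s₂ s₃ - r t₁ t₂ s₃‖ = ‖r s₁ s₂ s₃' - r t₁ t₂ s₃'‖ := by
  set K := (a - c) / √((a - b) * (b - c))
  set A := sin s₁ * cos s₂ - sin t₁ * cos t₂
  set B := cos s₁ * sin s₂ - cos t₁ * sin t₂
  have hKAB : (K * A) ^ 2 = (K * B) ^ 2 := by
    rw [mul_pow, mul_pow, sq_sin_mul_cos_sub_eq_of_add_sign_mul_eq hε hdiag]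
  simp only [hr, norm_pt_sub]
  congr 1
  linear_combination sq_mul_cos_add_sq_mul_sin_of_sq_eq hKAB s₃
    - sq_mul_cos_add_sq_mul_sin_of_sq_eq hKAB s₃'

theorem circular_cross_sections_deformed_isometrically
    (a b c : ℝ) (hab : b < a) (hbc : c < b) (hc : 0 < c)
    (r : ℝ → ℝ → ℝ → EuclideanSpace ℝ (Fin 3))
    (hr : ∀ s₁ s₂ s₃ : ℝ, r s₁ s₂ s₃ =
      pt (((a - c) / Real.sqrt ((a - b) * (b - c)))
            * Real.sin s₁ * Real.cos s₂ * Real.cos s₃)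
        ((1 / Real.sqrt (b - c))
            * Real.sqrt (1 - ((a - c) / (a - b)) * Real.sin s₁ ^ 2)
            * Real.sqrt (((a - c) / (a - b)) * Real.cos s₂ ^ 2 - 1))
        (((a - c) / Real.sqrt ((a - b) * (b - c)))
            * Real.cos s₁ * Real.sin s₂ * Real.sin s₃))
    (ε : ℝ) (hε : ε = 1 ∨ ε = -1)
    (s₃ s₃' : ℝ) (s₁ s₂ t₁ t₂ : ℝ)
    (hs₁ : s₁ ∈ Set.Icc (-(Real.arcsin (Real.sqrt ((a - b) / (a - c)))))
        (Real.arcsin (Real.sqrt ((a - b) / (a - c)))))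
    (hs₂ : s₂ ∈ Set.Icc (-(Real.arccos (Real.sqrt ((a - b) / (a - c)))))
        (Real.arccos (Real.sqrt ((a - b) / (a - c)))))
    (ht₁ : t₁ ∈ Set.Icc (-(Real.arcsin (Real.sqrt ((a - b) / (a - c)))))
        (Real.arcsin (Real.sqrt ((a - b) / (a - c)))))
    (ht₂ : t₂ ∈ Set.Icc (-(Real.arccos (Real.sqrt ((a - b) / (a - c)))))
        (Real.arccos (Real.sqrt ((a - b) / (a - c)))))
    (hdiag : s₁ + ε * s₂ = t₁ + ε * t₂) :
    ‖r s₁ s₂ s₃ - r t₁ t₂ s₃‖ = ‖r s₁ s₂ s₃' - r t₁ t₂ s₃'‖ :=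
  circular_cross_sections_deformed_isometrically_general a b c r hr ε hε s₃ s₃' s₁ s₂ t₁ t₂ hdiag
end

section
/- Let α > β > γ > 0 be reals and let f₁,g₁,h₁,f₂,g₂,h₂ : ℤ → ℝ satisfy, for every m ∈ ℤ, the discrete functional equations f₁(m)f₁(m+1) + g₁(m)g₁(m+1) = α−β, f₁(m)f₁(m+1) + h₁(m)h₁(m+1) = α−γ, f₂(m)f₂(m+1) − g₂(m)g₂(m+1) = α−β, f₂(m)f₂(m+1) + h₂(m)h₂(m+1) = α−γ. Define r : ℤ×ℤ → ℝ³ by r(m₁,m₂) = (√(α/((α−β)(α−γ)))·f₁(m₁)f₂(m₂), √(β/((α−β)(β−γ)))·g₁(m₁)g₂(m₂), √(γ/((α−γ)(β−γ)))·h₁(m₁)h₂(m₂)). Then for every (m₁,m₂) ∈ ℤ² the four points r(m₁−1,m₂−1), r(m₁+1,m₂−1), r(m₁+1,m₂+1), r(m₁−1,m₂+1) are coplanar (they lie in a common affine plane of ℝ³); i.e. all elementary quadrilaterals of the binet r are planar. -/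
open Real

/-!
Write the binet as the Hadamard product `r(m₁, m₂) = c * x(m₁) * y(m₂)` in `ℝ³`. The functional
equations say that `x(m) * x(m+1)` lies on the line `κ₁ + ℝσ` with `σ = (1,-1,-1)`,
`κ₁ = (0, α-β, α-γ)`, and `y(m) * y(m+1)` on `κ₂ + ℝτ` with `τ = (1,1,-1)`,
`κ₂ = (0, -(α-β), α-γ)`. For three consecutive vertices `x₀, x₁, x₂` this makes `x₁ * (x₂ - x₀)` a
multiple of `σ`, and likewise for `y`. Multiplying the edge vectors of the quadrilateral by
`x₁ * y₁` therefore puts all of them in the plane spanned by `σ * τ` and `σ * κ₂ = τ * κ₁`. If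
instead some coordinate of `x₁` (or `y₁`) vanishes, `x₂ - x₀` (or `y₂ - y₀`) is supported on that
coordinate, because for distinct `α, β, γ` a point of the line `κ₁ + ℝσ` (or `κ₂ + ℝτ`) has at most
one zero coordinate; then two edge vectors are parallel.
-/

open Module Matrix

universe u v₁ v₂ w₁ w₂

theorem Coplanar.image {k : Type u} {V₁ : Type v₁} {P₁ : Type w₁} {V₂ : Type v₂} {P₂ : Type w₂}
    [DivisionRing k] [AddCommGroup V₁] [Module k V₁] [AddTorsor V₁ P₁] [AddCommGroup V₂]
    [Module k V₂] [AddTorsor V₂ P₂] {s : Set P₁} (h : Coplanar k s) (f : P₁ →ᵃ[k] P₂) :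
    Coplanar k (f '' s) := by
  have hmap := lift_rank_map_le f.linear (vectorSpan k s)
  rw [AffineMap.map_vectorSpan] at hmap
  rw [Coplanar, ← Cardinal.lift_le.{v₁}]
  calc _ ≤ _ := hmap
    _ ≤ Cardinal.lift.{v₂} 2 := Cardinal.lift_le.2 h
    _ = _ := by simp

variable {K : Type*} [Field K]

theorem coplanar_of_det_eq_zero {p₀ p₁ p₂ p₃ : Fin 3 → K}
    (h : (of ![p₁ - p₀, p₂ - p₀, p₃ - p₀]).det = 0) :
    Coplanar K ({p₀, p₁, p₂, p₃} : Set (Fin 3 → K)) := by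
  set v : Fin 3 → Fin 3 → K := ![p₁ - p₀, p₂ - p₀, p₃ - p₀]
  have hv : ¬ LinearIndependent K v := by
    rw [show v = (of v).row from rfl, linearIndependent_rows_iff_isUnit, isUnit_iff_isUnit_det, h]
    exact not_isUnit_zero
  have hspan : vectorSpan K {p₀, p₁, p₂, p₃} = Submodule.span K (Set.range v) := by
    rw [vectorSpan_eq_span_vsub_set_right K (Set.mem_insert _ _)]
    simp only [Set.image_insert_eq, Set.image_singleton, vsub_eq_sub, sub_self,
      Submodule.span_insert_zero, v, Matrix.range_cons, Matrix.range_empty, Set.union_empty,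
      Set.singleton_union]
  rw [coplanar_iff_finrank_le_two, hspan]
  have hle := finrank_range_le_card (R := K) v
  have hne := mt linearIndependent_iff_card_eq_finrank_span.2 hv
  simp only [Fintype.card_fin, Set.finrank] at hle hne
  omega

theorem coplanar_toLp_of_det_eq_zero (q : ENNReal) {p₀ p₁ p₂ p₃ : Fin 3 → K}
    (h : (of ![p₁ - p₀, p₂ - p₀, p₃ - p₀]).det = 0) :
    Coplanar K ({WithLp.toLp q p₀, WithLp.toLp q p₁, WithLp.toLp q p₂, WithLp.toLp q p₃} :
      Set (WithLp q (Fin 3 → K))) := by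
  simpa [Set.image_insert_eq] using (coplanar_of_det_eq_zero h).image
    (WithLp.linearEquiv q K (Fin 3 → K)).symm.toLinearMap.toAffineMap

theorem Pi.single_mul_eq_smul {ι R : Type*} [DecidableEq ι] [CommRing R] (i : ι) (d : R)
    (u : ι → R) : Pi.single i d * u = (d * u i) • Pi.single i 1 := by
  rw [← Pi.single_mul_left, ← Pi.single_smul', smul_eq_mul, mul_one]

section Determinant

variable {R : Type*} [CommRing R]

theorem det_of_smul_add_smul_eq_zero (s k : Fin 3 → R) (a b c d e f : R) :
    (of ![a • s + b • k, c • s + d • k, e • s + f • k]).det = 0 := by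
  simp only [det_fin_three, of_apply, cons_val', Pi.add_apply, Pi.smul_apply, smul_eq_mul,
    cons_val_fin_one, cons_val_zero, cons_val_one, cons_val]
  ring

theorem det_of_mul_rows (d u v w : Fin 3 → R) :
    (of ![d * u, d * v, d * w]).det = (∏ i, d i) * (of ![u, v, w]).det := by
  rw [← det_mul_row]
  congr 1
  ext i j
  fin_cases i <;> rfl

variable {x₀ x₂ y₀ y₂ : Fin 3 → R}

theorem det_quad_eq_det_diff (x₀ x₂ y₀ y₂ : Fin 3 → R) :
    (of ![x₂ * y₀ - x₀ * y₀, x₂ * y₂ - x₀ * y₀, x₀ * y₂ - x₀ * y₀]).det =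
      (of ![(x₂ - x₀) * y₀, (x₂ - x₀) * (y₂ - y₀), x₀ * (y₂ - y₀)]).det := by
  simp only [det_fin_three, of_apply, cons_val', Pi.sub_apply, Pi.mul_apply, cons_val_fin_one,
    cons_val_zero, cons_val_one, cons_val]
  ring

theorem det_diff_eq_zero_of_sub_eq_single_left {i : Fin 3} {d : R}
    (h : x₂ - x₀ = Pi.single i d) :
    (of ![(x₂ - x₀) * y₀, (x₂ - x₀) * (y₂ - y₀), x₀ * (y₂ - y₀)]).det = 0 := by
  rw [h, Pi.single_mul_eq_smul, Pi.single_mul_eq_smul]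
  simpa using det_of_smul_add_smul_eq_zero (Pi.single i 1) (x₀ * (y₂ - y₀)) (d * y₀ i) 0
    (d * (y₂ - y₀) i) 0 0 1

theorem det_diff_eq_zero_of_sub_eq_single_right {i : Fin 3} {d : R}
    (h : y₂ - y₀ = Pi.single i d) :
    (of ![(x₂ - x₀) * y₀, (x₂ - x₀) * (y₂ - y₀), x₀ * (y₂ - y₀)]).det = 0 := by
  rw [h, mul_comm (x₂ - x₀) (Pi.single i d), mul_comm x₀ (Pi.single i d), Pi.single_mul_eq_smul,
    Pi.single_mul_eq_smul]
  simpa using det_of_smul_add_smul_eq_zero ((x₂ - x₀) * y₀) (Pi.single i 1) 1 0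
    0 (d * (x₂ - x₀) i) 0 (d * x₀ i)

end Determinant

def IsConfocalStep (σ κ x x' : Fin 3 → K) : Prop :=
  ∃ a : K, x * x' = a • σ + κ

def IsGenericLine (σ κ : Fin 3 → K) : Prop :=
  (∀ i, σ i ≠ 0) ∧ ∀ (a : K) (i j : Fin 3), i ≠ j → (a • σ + κ) i = 0 → (a • σ + κ) j ≠ 0

theorem isGenericLine_add_add {B G : K} (hB : B ≠ 0) (hG : G ≠ 0) (hBG : B ≠ G) :
    IsGenericLine ![1, -1, -1] ![0, B, G] := by
  refine ⟨fun i => by fin_cases i <;> simp, fun a i j hij hi hj => ?_⟩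
  fin_cases i <;> fin_cases j <;>
    simp only [Pi.add_apply, Pi.smul_apply, smul_eq_mul, Fin.isValue, Fin.zero_eta, Fin.mk_one,
      Fin.reduceFinMk, cons_val_zero, cons_val_one, cons_val] at hij hi hj <;>
    grind

theorem isGenericLine_sub_add {B G : K} (hB : B ≠ 0) (hG : G ≠ 0) (hBG : B ≠ G) :
    IsGenericLine ![1, 1, -1] ![0, -B, G] := by
  refine ⟨fun i => by fin_cases i <;> simp, fun a i j hij hi hj => ?_⟩
  fin_cases i <;> fin_cases j <;>
    simp only [Pi.add_apply, Pi.smul_apply, smul_eq_mul, Fin.isValue, Fin.zero_eta, Fin.mk_one,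
      Fin.reduceFinMk, cons_val_zero, cons_val_one, cons_val] at hij hi hj <;>
    grind

namespace IsConfocalStep

variable {σ κ x x' x₀ x₁ x₂ : Fin 3 → K} {i j : Fin 3}

theorem of_add_add {a b c a' b' c' B G : K} (h₁ : a * a' + b * b' = B)
    (h₂ : a * a' + c * c' = G) :
    IsConfocalStep ![1, -1, -1] ![0, B, G] ![a, b, c] ![a', b', c'] :=
  ⟨a * a', funext fun i => by
    fin_cases i <;>
      simp only [Pi.mul_apply, Pi.add_apply, Pi.smul_apply, smul_eq_mul, Fin.isValue, Fin.zero_eta,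
        Fin.mk_one, Fin.reduceFinMk, cons_val_zero, cons_val_one, cons_val]
    · ring
    · linear_combination h₁
    · linear_combination h₂⟩

theorem of_sub_add {a b c a' b' c' B G : K} (h₁ : a * a' - b * b' = B)
    (h₂ : a * a' + c * c' = G) :
    IsConfocalStep ![1, 1, -1] ![0, -B, G] ![a, b, c] ![a', b', c'] :=
  ⟨a * a', funext fun i => by
    fin_cases i <;>
      simp only [Pi.mul_apply, Pi.add_apply, Pi.smul_apply, smul_eq_mul, Fin.isValue, Fin.zero_eta,
        Fin.mk_one, Fin.reduceFinMk, cons_val_zero, cons_val_one, cons_val]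
    · ring
    · linear_combination -h₁
    · linear_combination h₂⟩

theorem exists_mul_sub_eq_smul (h₀₁ : IsConfocalStep σ κ x₀ x₁)
    (h₁₂ : IsConfocalStep σ κ x₁ x₂) : ∃ l : K, x₁ * (x₂ - x₀) = l • σ := by
  obtain ⟨a, ha⟩ := h₀₁
  obtain ⟨b, hb⟩ := h₁₂
  exact ⟨b - a, by rw [mul_sub, hb, mul_comm, ha, sub_smul]; abel⟩

theorem ne_zero_of_eq_zero (hL : IsGenericLine σ κ) (h : IsConfocalStep σ κ x x')
    (hi : x' i = 0) (hij : i ≠ j) : x' j ≠ 0 := by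
  obtain ⟨a, ha⟩ := h
  intro hj
  exact hL.2 a i j hij (by rw [← ha, Pi.mul_apply, hi, mul_zero])
    (by rw [← ha, Pi.mul_apply, hj, mul_zero])

theorem sub_eq_single (hL : IsGenericLine σ κ) (h₀₁ : IsConfocalStep σ κ x₀ x₁)
    (h₁₂ : IsConfocalStep σ κ x₁ x₂) (hi : x₁ i = 0) :
    x₂ - x₀ = Pi.single i ((x₂ - x₀) i) := by
  obtain ⟨l, hl⟩ := exists_mul_sub_eq_smul h₀₁ h₁₂
  have hl0 : l = 0 := by
    have := congrFun hl i
    simp only [Pi.mul_apply, hi, zero_mul, Pi.smul_apply, smul_eq_mul] at this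
    exact (mul_eq_zero.1 this.symm).resolve_right (hL.1 i)
  ext j
  rcases eq_or_ne j i with rfl | hji
  · simp
  · have := congrFun hl j
    simp only [hl0, zero_smul, Pi.mul_apply, Pi.zero_apply] at this
    simpa [hji] using (mul_eq_zero.1 this).resolve_left (ne_zero_of_eq_zero hL h₀₁ hi hji.symm)

end IsConfocalStep

section Quadrilateral

variable {σ τ κ₁ κ₂ x₀ x₁ x₂ y₀ y₁ y₂ : Fin 3 → K}

theorem det_diff_eq_zero_of_forall_ne_zero (hστ : σ * κ₂ = τ * κ₁)
    (hx₀₁ : IsConfocalStep σ κ₁ x₀ x₁) (hx₁₂ : IsConfocalStep σ κ₁ x₁ x₂)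
    (hy₀₁ : IsConfocalStep τ κ₂ y₀ y₁) (hy₁₂ : IsConfocalStep τ κ₂ y₁ y₂)
    (hx₁ : ∀ i, x₁ i ≠ 0) (hy₁ : ∀ i, y₁ i ≠ 0) :
    (of ![(x₂ - x₀) * y₀, (x₂ - x₀) * (y₂ - y₀), x₀ * (y₂ - y₀)]).det = 0 := by
  obtain ⟨l, hl⟩ := hx₀₁.exists_mul_sub_eq_smul hx₁₂
  obtain ⟨m, hm⟩ := hy₀₁.exists_mul_sub_eq_smul hy₁₂
  obtain ⟨a, ha⟩ := hx₀₁
  obtain ⟨b, hb⟩ := hy₀₁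
  have hD : ∏ i, (x₁ * y₁) i ≠ 0 :=
    Finset.prod_ne_zero_iff.2 fun i _ => mul_ne_zero (hx₁ i) (hy₁ i)
  have row₀ : x₁ * y₁ * ((x₂ - x₀) * y₀) = (l * b) • (σ * τ) + l • (σ * κ₂) := by
    rw [show x₁ * y₁ * ((x₂ - x₀) * y₀) = x₁ * (x₂ - x₀) * (y₀ * y₁) by ring, hl, hb,
      mul_add, smul_mul_smul_comm, smul_mul_assoc]
  have row₁ : x₁ * y₁ * ((x₂ - x₀) * (y₂ - y₀)) = (l * m) • (σ * τ) + (0 : K) • (σ * κ₂) := by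
    rw [show x₁ * y₁ * ((x₂ - x₀) * (y₂ - y₀)) = x₁ * (x₂ - x₀) * (y₁ * (y₂ - y₀)) by ring,
      hl, hm, smul_mul_smul_comm, zero_smul, add_zero]
  have row₂ : x₁ * y₁ * (x₀ * (y₂ - y₀)) = (m * a) • (σ * τ) + m • (σ * κ₂) := by
    rw [show x₁ * y₁ * (x₀ * (y₂ - y₀)) = x₀ * x₁ * (y₁ * (y₂ - y₀)) by ring, ha, hm, hστ,
      add_mul, smul_mul_smul_comm, mul_smul_comm, mul_comm a, mul_comm κ₁]
  rw [← mul_right_inj' hD, mul_zero, ← det_of_mul_rows, row₀, row₁, row₂]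
  exact det_of_smul_add_smul_eq_zero (σ * τ) (σ * κ₂) (l * b) l (l * m) 0 (m * a) m

theorem det_quad_eq_zero (hσ : IsGenericLine σ κ₁) (hτ : IsGenericLine τ κ₂)
    (hστ : σ * κ₂ = τ * κ₁)
    (hx₀₁ : IsConfocalStep σ κ₁ x₀ x₁) (hx₁₂ : IsConfocalStep σ κ₁ x₁ x₂)
    (hy₀₁ : IsConfocalStep τ κ₂ y₀ y₁) (hy₁₂ : IsConfocalStep τ κ₂ y₁ y₂) :
    (of ![x₂ * y₀ - x₀ * y₀, x₂ * y₂ - x₀ * y₀, x₀ * y₂ - x₀ * y₀]).det = 0 := by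
  rw [det_quad_eq_det_diff]
  by_cases hx₁ : ∃ i, x₁ i = 0
  · obtain ⟨i, hi⟩ := hx₁
    exact det_diff_eq_zero_of_sub_eq_single_left (hx₀₁.sub_eq_single hσ hx₁₂ hi)
  by_cases hy₁ : ∃ i, y₁ i = 0
  · obtain ⟨i, hi⟩ := hy₁
    exact det_diff_eq_zero_of_sub_eq_single_right (hy₀₁.sub_eq_single hτ hy₁₂ hi)
  push Not at hx₁ hy₁
  exact det_diff_eq_zero_of_forall_ne_zero hστ hx₀₁ hx₁₂ hy₀₁ hy₁₂ hx₁ hy₁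

end Quadrilateral

theorem binet_elementary_quadrilaterals_planar_general
    (α β γ : ℝ) (hαβ : β < α) (hβγ : γ < β)
    (f₁ g₁ h₁ f₂ g₂ h₂ : ℤ → ℝ)
    (hfe₁ : ∀ m : ℤ, f₁ m * f₁ (m + 1) + g₁ m * g₁ (m + 1) = α - β)
    (hfe₂ : ∀ m : ℤ, f₁ m * f₁ (m + 1) + h₁ m * h₁ (m + 1) = α - γ)
    (hfe₃ : ∀ m : ℤ, f₂ m * f₂ (m + 1) - g₂ m * g₂ (m + 1) = α - β)
    (hfe₄ : ∀ m : ℤ, f₂ m * f₂ (m + 1) + h₂ m * h₂ (m + 1) = α - γ)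
    (r : ℤ → ℤ → EuclideanSpace ℝ (Fin 3))
    (hr : ∀ m₁ m₂ : ℤ, r m₁ m₂ =
      pt (Real.sqrt (α / ((α - β) * (α - γ))) * f₁ m₁ * f₂ m₂)
        (Real.sqrt (β / ((α - β) * (β - γ))) * g₁ m₁ * g₂ m₂)
        (Real.sqrt (γ / ((α - γ) * (β - γ))) * h₁ m₁ * h₂ m₂))
    (m₁ m₂ : ℤ) :
    Coplanar ℝ ({r (m₁ - 1) (m₂ - 1), r (m₁ + 1) (m₂ - 1),
      r (m₁ + 1) (m₂ + 1), r (m₁ - 1) (m₂ + 1)} :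
        Set (EuclideanSpace ℝ (Fin 3))) := by
  have hB : α - β ≠ 0 := sub_ne_zero.2 hαβ.ne'
  have hG : α - γ ≠ 0 := sub_ne_zero.2 (hβγ.trans hαβ).ne'
  have hBG : α - β ≠ α - γ := fun h => hβγ.ne' (sub_right_injective h)
  set x : ℤ → Fin 3 → ℝ := fun m => ![f₁ m, g₁ m, h₁ m]
  set y : ℤ → Fin 3 → ℝ := fun m => ![f₂ m, g₂ m, h₂ m]
  set c : Fin 3 → ℝ := ![√(α / ((α - β) * (α - γ))), √(β / ((α - β) * (β - γ))),
    √(γ / ((α - γ) * (β - γ)))]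
  have hx (m : ℤ) : IsConfocalStep ![1, -1, -1] ![0, α - β, α - γ] (x m) (x (m + 1)) :=
    .of_add_add (hfe₁ m) (hfe₂ m)
  have hy (m : ℤ) : IsConfocalStep ![1, 1, -1] ![0, -(α - β), α - γ] (y m) (y (m + 1)) :=
    .of_sub_add (hfe₃ m) (hfe₄ m)
  have hr' (m₁ m₂ : ℤ) : r m₁ m₂ = WithLp.toLp 2 (c * (x m₁ * y m₂)) := by
    rw [hr]
    ext i
    fin_cases i <;> simp [pt, c, x, y, mul_assoc]
  rw [hr', hr', hr', hr']
  apply coplanar_toLp_of_det_eq_zero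
  simp only [← mul_sub c, det_of_mul_rows]
  rw [det_quad_eq_zero (isGenericLine_add_add hB hG hBG) (isGenericLine_sub_add hB hG hBG) ?_
    (by simpa using hx (m₁ - 1)) (hx m₁) (by simpa using hy (m₂ - 1)) (hy m₂), mul_zero]
  ext i
  fin_cases i <;> simp

theorem binet_elementary_quadrilaterals_planar
    (α β γ : ℝ) (hαβ : β < α) (hβγ : γ < β) (hγ : 0 < γ)
    (f₁ g₁ h₁ f₂ g₂ h₂ : ℤ → ℝ)
    (hfe₁ : ∀ m : ℤ, f₁ m * f₁ (m + 1) + g₁ m * g₁ (m + 1) = α - β)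
    (hfe₂ : ∀ m : ℤ, f₁ m * f₁ (m + 1) + h₁ m * h₁ (m + 1) = α - γ)
    (hfe₃ : ∀ m : ℤ, f₂ m * f₂ (m + 1) - g₂ m * g₂ (m + 1) = α - β)
    (hfe₄ : ∀ m : ℤ, f₂ m * f₂ (m + 1) + h₂ m * h₂ (m + 1) = α - γ)
    (r : ℤ → ℤ → EuclideanSpace ℝ (Fin 3))
    (hr : ∀ m₁ m₂ : ℤ, r m₁ m₂ =
      pt (Real.sqrt (α / ((α - β) * (α - γ))) * f₁ m₁ * f₂ m₂)
        (Real.sqrt (β / ((α - β) * (β - γ))) * g₁ m₁ * g₂ m₂)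
        (Real.sqrt (γ / ((α - γ) * (β - γ))) * h₁ m₁ * h₂ m₂))
    (m₁ m₂ : ℤ) :
    Coplanar ℝ ({r (m₁ - 1) (m₂ - 1), r (m₁ + 1) (m₂ - 1),
      r (m₁ + 1) (m₂ + 1), r (m₁ - 1) (m₂ + 1)} :
        Set (EuclideanSpace ℝ (Fin 3))) :=
  binet_elementary_quadrilaterals_planar_general α β γ hαβ hβγ f₁ g₁ h₁ f₂ g₂ h₂ hfe₁ hfe₂ hfe₃ hfe₄
    r hr m₁ m₂
end

section
/- Let α > β > γ > 0 be reals, let f₁,g₁,h₁,f₂,g₂,h₂ : ℤ → ℝ satisfy the discrete functional equations, and let r = (x,y,z) : ℤ×ℤ → ℝ³ be the associated discrete ellipsoid binet. Then the polarity relation with respect to the classical ellipsoid x²/α + y²/β + z²/γ = 1 holds between each vertex and its four diagonal neighbours: for every (m₁,m₂) ∈ ℤ² and all signs σ, τ ∈ {1,−1}, x(m₁,m₂)·x(m₁+σ,m₂+τ)/α + y(m₁,m₂)·y(m₁+σ,m₂+τ)/β + z(m₁,m₂)·z(m₁+σ,m₂+τ)/γ = 1. Equivalently, each vertex of the binet is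 the pole, with respect to the classical ellipsoid, of the plane spanned by the dual face through its four diagonal neighbours. -/
open Real

lemma binet_key (α β γ F1 G1 H1 F2 G2 H2 : ℝ)
    (hαβ : 0 < α - β) (hαγ : 0 < α - γ) (hβγ : 0 < β - γ)
    (hα : 0 < α) (hβ : 0 < β) (hγ : 0 < γ)
    (e1 : F1 + G1 = α - β) (e2 : F1 + H1 = α - γ)
    (e3 : F2 - G2 = α - β) (e4 : F2 + H2 = α - γ) :
    (α / ((α - β) * (α - γ))) * (F1 * F2) / α
      + (β / ((α - β) * (β - γ))) * (G1 * G2) / β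
      + (γ / ((α - γ) * (β - γ))) * (H1 * H2) / γ = 1 := by
  have h1 : G1 = α - β - F1 := by linarith
  have h2 : H1 = α - γ - F1 := by linarith
  have h3 : G2 = F2 - (α - β) := by linarith
  have h4 : H2 = α - γ - F2 := by linarith
  subst h1 h2 h3 h4
  field_simp
  ring

theorem binet_polarity_with_classical_ellipsoid
    (α β γ : ℝ) (hαβ : β < α) (hβγ : γ < β) (hγ : 0 < γ)
    (f₁ g₁ h₁ f₂ g₂ h₂ : ℤ → ℝ)
    (hfe₁ : ∀ m : ℤ, f₁ m * f₁ (m + 1) + g₁ m * g₁ (m + 1) = α - β)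
    (hfe₂ : ∀ m : ℤ, f₁ m * f₁ (m + 1) + h₁ m * h₁ (m + 1) = α - γ)
    (hfe₃ : ∀ m : ℤ, f₂ m * f₂ (m + 1) - g₂ m * g₂ (m + 1) = α - β)
    (hfe₄ : ∀ m : ℤ, f₂ m * f₂ (m + 1) + h₂ m * h₂ (m + 1) = α - γ)
    (x y z : ℤ → ℤ → ℝ)
    (hx : ∀ m₁ m₂ : ℤ, x m₁ m₂ = Real.sqrt (α / ((α - β) * (α - γ))) * f₁ m₁ * f₂ m₂)
    (hy : ∀ m₁ m₂ : ℤ, y m₁ m₂ = Real.sqrt (β / ((α - β) * (β - γ))) * g₁ m₁ * g₂ m₂)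
    (hz : ∀ m₁ m₂ : ℤ, z m₁ m₂ = Real.sqrt (γ / ((α - γ) * (β - γ))) * h₁ m₁ * h₂ m₂)
    (m₁ m₂ : ℤ) (σ τ : ℤ) (hσ : σ = 1 ∨ σ = -1) (hτ : τ = 1 ∨ τ = -1) :
    x m₁ m₂ * x (m₁ + σ) (m₂ + τ) / α
      + y m₁ m₂ * y (m₁ + σ) (m₂ + τ) / β
      + z m₁ m₂ * z (m₁ + σ) (m₂ + τ) / γ = 1 := by
  have hαβ' : 0 < α - β := by linarith
  have hαγ' : 0 < α - γ := by linarith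
  have hβγ' : 0 < β - γ := by linarith
  have hα : 0 < α := by linarith
  have hβ : 0 < β := by linarith
  have ha : Real.sqrt (α / ((α - β) * (α - γ))) * Real.sqrt (α / ((α - β) * (α - γ)))
      = α / ((α - β) * (α - γ)) := Real.mul_self_sqrt (by positivity)
  have hb : Real.sqrt (β / ((α - β) * (β - γ))) * Real.sqrt (β / ((α - β) * (β - γ)))
      = β / ((α - β) * (β - γ)) := Real.mul_self_sqrt (by positivity)
  have hc : Real.sqrt (γ / ((α - γ) * (β - γ))) * Real.sqrt (γ / ((α - γ) * (β - γ)))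
      = γ / ((α - γ) * (β - γ)) := Real.mul_self_sqrt (by positivity)
  -- the products along the diagonals satisfy the same relations regardless of sign
  have e1 : f₁ m₁ * f₁ (m₁ + σ) + g₁ m₁ * g₁ (m₁ + σ) = α - β := by
    rcases hσ with h | h <;> subst h
    · exact hfe₁ m₁
    · have := hfe₁ (m₁ - 1)
      rw [show m₁ - 1 + 1 = m₁ by ring] at this
      rw [show m₁ + (-1 : ℤ) = m₁ - 1 by ring]
      linarith [this, mul_comm (f₁ (m₁ - 1)) (f₁ m₁), mul_comm (g₁ (m₁ - 1)) (g₁ m₁)]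
  have e2 : f₁ m₁ * f₁ (m₁ + σ) + h₁ m₁ * h₁ (m₁ + σ) = α - γ := by
    rcases hσ with h | h <;> subst h
    · exact hfe₂ m₁
    · have := hfe₂ (m₁ - 1)
      rw [show m₁ - 1 + 1 = m₁ by ring] at this
      rw [show m₁ + (-1 : ℤ) = m₁ - 1 by ring]
      linarith [this, mul_comm (f₁ (m₁ - 1)) (f₁ m₁), mul_comm (h₁ (m₁ - 1)) (h₁ m₁)]
  have e3 : f₂ m₂ * f₂ (m₂ + τ) - g₂ m₂ * g₂ (m₂ + τ) = α - β := by
    rcases hτ with h | h <;> subst h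
    · exact hfe₃ m₂
    · have := hfe₃ (m₂ - 1)
      rw [show m₂ - 1 + 1 = m₂ by ring] at this
      rw [show m₂ + (-1 : ℤ) = m₂ - 1 by ring]
      linarith [this, mul_comm (f₂ (m₂ - 1)) (f₂ m₂), mul_comm (g₂ (m₂ - 1)) (g₂ m₂)]
  have e4 : f₂ m₂ * f₂ (m₂ + τ) + h₂ m₂ * h₂ (m₂ + τ) = α - γ := by
    rcases hτ with h | h <;> subst h
    · exact hfe₄ m₂
    · have := hfe₄ (m₂ - 1)
      rw [show m₂ - 1 + 1 = m₂ by ring] at this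
      rw [show m₂ + (-1 : ℤ) = m₂ - 1 by ring]
      linarith [this, mul_comm (f₂ (m₂ - 1)) (f₂ m₂), mul_comm (h₂ (m₂ - 1)) (h₂ m₂)]
  have hxx : x m₁ m₂ * x (m₁ + σ) (m₂ + τ)
      = (α / ((α - β) * (α - γ))) * ((f₁ m₁ * f₁ (m₁ + σ)) * (f₂ m₂ * f₂ (m₂ + τ))) := by
    rw [hx, hx]
    linear_combination (f₁ m₁ * f₁ (m₁ + σ) * (f₂ m₂ * f₂ (m₂ + τ))) * ha
  have hyy : y m₁ m₂ * y (m₁ + σ) (m₂ + τ)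
      = (β / ((α - β) * (β - γ))) * ((g₁ m₁ * g₁ (m₁ + σ)) * (g₂ m₂ * g₂ (m₂ + τ))) := by
    rw [hy, hy]
    linear_combination (g₁ m₁ * g₁ (m₁ + σ) * (g₂ m₂ * g₂ (m₂ + τ))) * hb
  have hzz : z m₁ m₂ * z (m₁ + σ) (m₂ + τ)
      = (γ / ((α - γ) * (β - γ))) * ((h₁ m₁ * h₁ (m₁ + σ)) * (h₂ m₂ * h₂ (m₂ + τ))) := by
    rw [hz, hz]
    linear_combination (h₁ m₁ * h₁ (m₁ + σ) * (h₂ m₂ * h₂ (m₂ + τ))) * hc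
  rw [hxx, hyy, hzz]
  exact binet_key α β γ _ _ _ _ _ _ hαβ' hαγ' hβγ' hα hβ hγ e1 e2 e3 e4
end

section
/- Let α > β > γ > 0 be reals, δ ∈ (0,π), and ε = 1/√(cos(δ/2)). Define f₁(m) = ε√(α−γ)·sin(δm/2), h₁(m) = ε√(α−γ)·cos(δm/2), f₂(m) = ε√(α−γ)·cos(δm/2), h₂(m) = ε√(α−γ)·sin(δm/2) for m ∈ ℤ, and let g₁, g₂ : ℤ → ℝ satisfy g₁(m)g₁(m+1) = (α−β) − f₁(m)f₁(m+1) and g₂(m)g₂(m+1) = f₂(m)f₂(m+1) − (α−β) for all m ∈ ℤ. Let r = (x,y,z) be the associated discrete ellipsoid binet. Then: (a) for all m ∈ ℤ, f₁(m)f₁(m+1) + h₁(m)h₁(m+1) = α−γ and f₂(m)f₂(m+1) + h₂(m)h₂(m+1) = α−γ, so the full set of discrete functional equations is satisfied; and (b) for every sign σ ∈ {1,−1} and all (m₁,m₂) ∈ ℤ², √(1/β − 1/α)·x(m₁,m₂) + σ·√(1/γ − 1/β)·z(m₁,m₂) = (1/cos(δ/2))·√((α−γ)/β)·sin(δ(m₁+σm₂)/2).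 In particular this quantity depends only on m₁ + σm₂, so the diagonal polygons m₁ + σm₂ = const lie in the parallel planes of the circular cross sections of the classical ellipsoid x²/α + y²/β + z²/γ = 1. -/
/-!
With `c = ε √(α - γ)` one has `c² cos(δ/2) = α - γ`, and the amplitudes `c sin(δm/2)`,
`c cos(δm/2)` satisfy the remaining functional equations by the subtraction formula
`sin a sin b + cos a cos b = cos (b - a)` with `b - a = δ/2`.
For the diagonals, the coefficients `√(1/β - 1/α) √(α/((α-β)(α-γ)))` of `x` and
`√(1/γ - 1/β) √(γ/((α-γ)(β-γ)))` of `z` are both equal to `√((α - γ)/β) / (α - γ)`, so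
`√(1/β - 1/α) x ± √(1/γ - 1/β) z` is a common multiple of
`sin a cos b ± cos a sin b = sin (a ± b)`.
-/

open Real

theorem mul_sin_mul_sin_add_mul_cos_mul_cos (c δ t : ℝ) :
    c * sin (δ * t / 2) * (c * sin (δ * (t + 1) / 2))
      + c * cos (δ * t / 2) * (c * cos (δ * (t + 1) / 2)) = c ^ 2 * cos (δ / 2) := by
  have hstep : δ / 2 = δ * (t + 1) / 2 - δ * t / 2 := by ring
  rw [hstep, cos_sub]
  ring

theorem sin_mul_cos_add_sign_mul_cos_mul_sin {σ : ℤ} (hσ : σ = 1 ∨ σ = -1) (a b : ℝ) :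
    sin a * cos b + σ * (cos a * sin b) = sin (a + σ * b) := by
  rcases hσ with rfl | rfl <;> simp [sin_add]

theorem sqrt_mul_sqrt_mul_of_mul_mul_sq_eq {a b c r : ℝ} (ha : 0 ≤ a) (hr : 0 ≤ r)
    (h : a * b * r ^ 2 = c) : √a * √b * r = √c := by
  rw [← h, sqrt_mul' _ (sq_nonneg r), sqrt_sq hr, sqrt_mul ha]

theorem sqrt_one_div_sub_one_div_mul_sqrt_mul {p q r : ℝ} (hq : 0 < q) (hqp : q < p)
    (hr : 0 < r) : √(1 / q - 1 / p) * √(p / ((p - q) * r)) * r = √(r / q) := by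
  have hpq : 0 < p - q := sub_pos.mpr hqp
  have hp : 0 < p := hq.trans hqp
  exact sqrt_mul_sqrt_mul_of_mul_mul_sq_eq
    (sub_nonneg.mpr (one_div_le_one_div_of_le hq hqp.le)) hr.le (by field_simp)

theorem sqrt_one_div_sub_one_div_mul_sqrt_mul' {p q r : ℝ} (hq : 0 < q) (hqp : q < p)
    (hr : 0 < r) : √(1 / q - 1 / p) * √(q / (r * (p - q))) * r = √(r / p) := by
  have hpq : 0 < p - q := sub_pos.mpr hqp
  have hp : 0 < p := hq.trans hqp
  exact sqrt_mul_sqrt_mul_of_mul_mul_sq_eq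
    (sub_nonneg.mpr (one_div_le_one_div_of_le hq hqp.le)) hr.le (by field_simp)

theorem discrete_ellipsoid_trig_solution_diagonals_in_circular_planes_general
    (α β γ : ℝ) (hαβ : β < α) (hβγ : γ < β) (hγ : 0 < γ)
    (δ : ℝ) (hδ : δ ∈ Set.Ioo 0 Real.pi)
    (ε : ℝ) (hεdef : ε = 1 / Real.sqrt (Real.cos (δ / 2)))
    (f₁ h₁ f₂ h₂ : ℤ → ℝ)
    (hf₁ : ∀ m : ℤ, f₁ m = ε * Real.sqrt (α - γ) * Real.sin (δ * m / 2))
    (hh₁ : ∀ m : ℤ, h₁ m = ε * Real.sqrt (α - γ) * Real.cos (δ * m / 2))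
    (hf₂ : ∀ m : ℤ, f₂ m = ε * Real.sqrt (α - γ) * Real.cos (δ * m / 2))
    (hh₂ : ∀ m : ℤ, h₂ m = ε * Real.sqrt (α - γ) * Real.sin (δ * m / 2))
    (x z : ℤ → ℤ → ℝ)
    (hx : ∀ m₁ m₂ : ℤ, x m₁ m₂ = Real.sqrt (α / ((α - β) * (α - γ))) * f₁ m₁ * f₂ m₂)
    (hz : ∀ m₁ m₂ : ℤ, z m₁ m₂ = Real.sqrt (γ / ((α - γ) * (β - γ))) * h₁ m₁ * h₂ m₂) :
    (∀ m : ℤ, f₁ m * f₁ (m + 1) + h₁ m * h₁ (m + 1) = α - γ ∧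
      f₂ m * f₂ (m + 1) + h₂ m * h₂ (m + 1) = α - γ) ∧
    (∀ σ : ℤ, (σ = 1 ∨ σ = -1) → ∀ m₁ m₂ : ℤ,
      Real.sqrt (1 / β - 1 / α) * x m₁ m₂ + (σ : ℝ) * Real.sqrt (1 / γ - 1 / β) * z m₁ m₂
        = (1 / Real.cos (δ / 2)) * Real.sqrt ((α - γ) / β)
            * Real.sin (δ * ((m₁ : ℝ) + (σ : ℝ) * (m₂ : ℝ)) / 2)) := by
  obtain ⟨hδ0, hδπ⟩ := hδ
  have hαγ : 0 < α - γ := by linarith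
  have hcos : 0 < cos (δ / 2) := cos_pos_of_mem_Ioo ⟨by linarith [pi_pos], by linarith⟩
  have hamp : (ε * √(α - γ)) ^ 2 = (α - γ) / cos (δ / 2) := by
    rw [hεdef, mul_pow, div_pow, one_pow, sq_sqrt hcos.le, sq_sqrt hαγ.le, one_div_mul_eq_div]
  refine ⟨fun m => ⟨?_, ?_⟩, fun σ hσ m₁ m₂ => ?_⟩
  · rw [hf₁, hf₁, hh₁, hh₁, Int.cast_add, Int.cast_one,
      mul_sin_mul_sin_add_mul_cos_mul_cos, hamp, div_mul_cancel₀ _ hcos.ne']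
  · rw [hf₂, hf₂, hh₂, hh₂, Int.cast_add, Int.cast_one, add_comm,
      mul_sin_mul_sin_add_mul_cos_mul_cos, hamp, div_mul_cancel₀ _ hcos.ne']
  · have hcx := sqrt_one_div_sub_one_div_mul_sqrt_mul (hγ.trans hβγ) hαβ hαγ
    have hcz := sqrt_one_div_sub_one_div_mul_sqrt_mul' hγ hβγ hαγ
    have hangle : δ * ((m₁ : ℝ) + σ * m₂) / 2 = δ * m₁ / 2 + σ * (δ * m₂ / 2) := by ring
    rw [hx, hz, hf₁, hf₂, hh₁, hh₂, hangle, ← sin_mul_cos_add_sign_mul_cos_mul_sin hσ]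
    linear_combination
      (sin (δ * m₁ / 2) * cos (δ * m₂ / 2)) *
          (√(1 / β - 1 / α) * √(α / ((α - β) * (α - γ))) * hamp + hcx / cos (δ / 2))
        + σ * (cos (δ * m₁ / 2) * sin (δ * m₂ / 2)) *
          (√(1 / γ - 1 / β) * √(γ / ((α - γ) * (β - γ))) * hamp + hcz / cos (δ / 2))

theorem discrete_ellipsoid_trig_solution_diagonals_in_circular_planes
    (α β γ : ℝ) (hαβ : β < α) (hβγ : γ < β) (hγ : 0 < γ)
    (δ : ℝ) (hδ : δ ∈ Set.Ioo 0 Real.pi)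
    (ε : ℝ) (hεdef : ε = 1 / Real.sqrt (Real.cos (δ / 2)))
    (f₁ h₁ f₂ h₂ : ℤ → ℝ)
    (hf₁ : ∀ m : ℤ, f₁ m = ε * Real.sqrt (α - γ) * Real.sin (δ * m / 2))
    (hh₁ : ∀ m : ℤ, h₁ m = ε * Real.sqrt (α - γ) * Real.cos (δ * m / 2))
    (hf₂ : ∀ m : ℤ, f₂ m = ε * Real.sqrt (α - γ) * Real.cos (δ * m / 2))
    (hh₂ : ∀ m : ℤ, h₂ m = ε * Real.sqrt (α - γ) * Real.sin (δ * m / 2))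
    (g₁ g₂ : ℤ → ℝ)
    (hg₁ : ∀ m : ℤ, g₁ m * g₁ (m + 1) = (α - β) - f₁ m * f₁ (m + 1))
    (hg₂ : ∀ m : ℤ, g₂ m * g₂ (m + 1) = f₂ m * f₂ (m + 1) - (α - β))
    (x y z : ℤ → ℤ → ℝ)
    (hx : ∀ m₁ m₂ : ℤ, x m₁ m₂ = Real.sqrt (α / ((α - β) * (α - γ))) * f₁ m₁ * f₂ m₂)
    (hy : ∀ m₁ m₂ : ℤ, y m₁ m₂ = Real.sqrt (β / ((α - β) * (β - γ))) * g₁ m₁ * g₂ m₂)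
    (hz : ∀ m₁ m₂ : ℤ, z m₁ m₂ = Real.sqrt (γ / ((α - γ) * (β - γ))) * h₁ m₁ * h₂ m₂) :
    (∀ m : ℤ, f₁ m * f₁ (m + 1) + h₁ m * h₁ (m + 1) = α - γ ∧
      f₂ m * f₂ (m + 1) + h₂ m * h₂ (m + 1) = α - γ) ∧
    (∀ σ : ℤ, (σ = 1 ∨ σ = -1) → ∀ m₁ m₂ : ℤ,
      Real.sqrt (1 / β - 1 / α) * x m₁ m₂ + (σ : ℝ) * Real.sqrt (1 / γ - 1 / β) * z m₁ m₂
        = (1 / Real.cos (δ / 2)) * Real.sqrt ((α - γ) / β)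
            * Real.sin (δ * ((m₁ : ℝ) + (σ : ℝ) * (m₂ : ℝ)) / 2)) :=
  discrete_ellipsoid_trig_solution_diagonals_in_circular_planes_general α β γ hαβ hβγ hγ δ hδ ε
    hεdef f₁ h₁ f₂ h₂ hf₁ hh₁ hf₂ hh₂ x z hx hz
end

section
/- Let a > b > c > 0 be reals and δ ∈ (0,π). Let g₁, g₂ : ℤ → ℝ satisfy g₁(m)g₁(m+1) = (a−b) − ((a−c)/cos(δ/2))·sin(δm/2)·sin(δ(m+1)/2) and g₂(m)g₂(m+1) = ((a−c)/cos(δ/2))·cos(δm/2)·cos(δ(m+1)/2) − (a−b) for all m ∈ ℤ. For s₃ ∈ ℝ define r(m₁,m₂,s₃) = (x,y,z) ∈ ℝ³ by x = (1/cos(δ/2))·((a−c)/√((a−b)(b−c)))·sin(δm₁/2)·cos(δm₂/2)·cos s₃, y = (1/√((a−b)(b−c)))·g₁(m₁)·g₂(m₂), z = (1/cos(δ/2))·((a−c)/√((a−b)(b−c)))·cos(δm₁/2)·sin(δm₂/2)·sin s₃. Fix a sign σ ∈ {1,−1}. Then for all s₃, s₃' ∈ ℝ and all (m₁,m₂), (m₁',m₂')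 ∈ ℤ² with m₁ + σm₂ = m₁' + σm₂', one has ‖r(m₁,m₂,s₃) − r(m₁',m₂',s₃)‖ = ‖r(m₁,m₂,s₃') − r(m₁',m₂',s₃')‖. That is, as s₃ varies, corresponding discrete circular cross sections (diagonal polygons m₁ + σm₂ = const) of the family of discrete ellipsoids are congruent. -/
open Real

lemma pt_sub_norm (x y z x' y' z' : ℝ) :
    ‖pt x y z - pt x' y' z'‖ = Real.sqrt ((x - x')^2 + (y - y')^2 + (z - z')^2) := by
  simp [pt, EuclideanSpace.norm_eq, Fin.sum_univ_three, sq_abs]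

theorem discrete_circular_cross_sections_congruent_under_deformation
    (a b c : ℝ) (hab : b < a) (hbc : c < b) (hc : 0 < c)
    (δ : ℝ) (hδ : δ ∈ Set.Ioo 0 Real.pi)
    (g₁ g₂ : ℤ → ℝ)
    (hg₁ : ∀ m : ℤ, g₁ m * g₁ (m + 1) =
      (a - b) - ((a - c) / Real.cos (δ / 2))
        * Real.sin (δ * m / 2) * Real.sin (δ * (m + 1) / 2))
    (hg₂ : ∀ m : ℤ, g₂ m * g₂ (m + 1) =
      ((a - c) / Real.cos (δ / 2))
        * Real.cos (δ * m / 2) * Real.cos (δ * (m + 1) / 2) - (a - b))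
    (r : ℤ → ℤ → ℝ → EuclideanSpace ℝ (Fin 3))
    (hr : ∀ (m₁ m₂ : ℤ) (s₃ : ℝ), r m₁ m₂ s₃ =
      pt ((1 / Real.cos (δ / 2)) * ((a - c) / Real.sqrt ((a - b) * (b - c)))
            * Real.sin (δ * m₁ / 2) * Real.cos (δ * m₂ / 2) * Real.cos s₃)
        ((1 / Real.sqrt ((a - b) * (b - c))) * g₁ m₁ * g₂ m₂)
        ((1 / Real.cos (δ / 2)) * ((a - c) / Real.sqrt ((a - b) * (b - c)))
            * Real.cos (δ * m₁ / 2) * Real.sin (δ * m₂ / 2) * Real.sin s₃))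
    (σ : ℤ) (hσ : σ = 1 ∨ σ = -1)
    (s₃ s₃' : ℝ) (m₁ m₂ m₁' m₂' : ℤ)
    (hdiag : m₁ + σ * m₂ = m₁' + σ * m₂') :
    ‖r m₁ m₂ s₃ - r m₁' m₂' s₃‖ = ‖r m₁ m₂ s₃' - r m₁' m₂' s₃'‖ := by
  rw [hr, hr, hr, hr, pt_sub_norm, pt_sub_norm]
  set K := (1 / Real.cos (δ / 2)) * ((a - c) / Real.sqrt ((a - b) * (b - c))) with hK
  set Y := (1 / Real.sqrt ((a - b) * (b - c))) * g₁ m₁ * g₂ m₂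
    - (1 / Real.sqrt ((a - b) * (b - c))) * g₁ m₁' * g₂ m₂' with hY
  set A := δ * m₁ / 2
  set B := δ * m₂ / 2
  set A' := δ * m₁' / 2
  set B' := δ * m₂' / 2
  have key : (Real.sin A * Real.cos B - Real.sin A' * Real.cos B')^2
      = (Real.cos A * Real.sin B - Real.cos A' * Real.sin B')^2 := by
    rcases hσ with h | h
    · have hm : (m₁ : ℝ) + m₂ = (m₁' : ℝ) + m₂' := by
        subst h; exact_mod_cast congrArg (Int.cast : ℤ → ℝ) (by linarith [hdiag] : m₁ + m₂ = m₁' + m₂')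
      have hAB : A + B = A' + B' := by
        simp only [A, B, A', B']; linear_combination (δ / 2) * hm
      have h1 := Real.sin_add A B
      have h2 := Real.sin_add A' B'
      rw [← hAB] at h2
      have : Real.sin A * Real.cos B - Real.sin A' * Real.cos B'
          = -(Real.cos A * Real.sin B - Real.cos A' * Real.sin B') := by linarith
      rw [this]; ring
    · have hm : (m₁ : ℝ) - m₂ = (m₁' : ℝ) - m₂' := by
        subst h; exact_mod_cast congrArg (Int.cast : ℤ → ℝ) (by linarith [hdiag] : m₁ - m₂ = m₁' - m₂')
      have hAB : A - B = A' - B' := by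
        simp only [A, B, A', B']; linear_combination (δ / 2) * hm
      have h1 := Real.sin_sub A B
      have h2 := Real.sin_sub A' B'
      rw [← hAB] at h2
      have : Real.sin A * Real.cos B - Real.sin A' * Real.cos B'
          = Real.cos A * Real.sin B - Real.cos A' * Real.sin B' := by linarith
      rw [this]
  have expand : ∀ t : ℝ,
      (K * Real.sin A * Real.cos B * Real.cos t - K * Real.sin A' * Real.cos B' * Real.cos t)^2
        + Y^2
        + (K * Real.cos A * Real.sin B * Real.sin t - K * Real.cos A' * Real.sin B' * Real.sin t)^2
      = K^2 * (Real.sin A * Real.cos B - Real.sin A' * Real.cos B')^2 + Y^2 := by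
    intro t
    have h := Real.sin_sq_add_cos_sq t
    linear_combination (K^2 * (Real.sin A * Real.cos B - Real.sin A' * Real.cos B')^2) * h
      - (K^2 * (Real.sin t)^2) * key
  congr 1
  rw [show (K * Real.sin A * Real.cos B * Real.cos s₃ - K * Real.sin A' * Real.cos B' * Real.cos s₃)
      = K * Real.sin A * Real.cos B * Real.cos s₃ - K * Real.sin A' * Real.cos B' * Real.cos s₃ from rfl]
  calc (K * Real.sin A * Real.cos B * Real.cos s₃ - K * Real.sin A' * Real.cos B' * Real.cos s₃)^2
        + Y^2
        + (K * Real.cos A * Real.sin B * Real.sin s₃ - K * Real.cos A' * Real.sin B' * Real.sin s₃)^2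
      = K^2 * (Real.sin A * Real.cos B - Real.sin A' * Real.cos B')^2 + Y^2 := expand s₃
    _ = _ := (expand s₃').symm
end

section
/- Let α > β > γ > 0 be reals, δ ∈ (0,π), ε = 1/√(cos(δ/2)), f₁(m) = ε√(α−γ)·sin(δm/2), h₁(m) = ε√(α−γ)·cos(δm/2), f₂(m) = ε√(α−γ)·cos(δm/2), h₂(m) = ε√(α−γ)·sin(δm/2), and let g₁, g₂ : ℤ → ℝ satisfy g₁(m)g₁(m+1) = (α−β) − f₁(m)f₁(m+1) and g₂(m)g₂(m+1) = f₂(m)f₂(m+1) − (α−β) for all m ∈ ℤ. Let r = (x,y,z) be the associated discrete ellipsoid binet. Fix a sign σ ∈ {1,−1} and k ∈ ℤ with sin(δk/2) ≠ 0. Then the polar planes of the ellipsoid x²/α + y²/β + z²/γ = 1 at the vertices along the diagonal polygon m₁ + σm₂ = k have a common point: there exists p = (p₁,p₂,p₃) ∈ ℝ³ such that for every m ∈ ℤ, writing v(m) = (x(m,σ(k−m)), y(m,σ(k−m)), z(m,σ(k−m))), one has p₁·x(m,σ(k−m))/α + p₂·y(m,σ(k−m))/β + p₃·z(m,σ(k−m))/γ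 = 1. -/
/-!
With `S = ε √(α - γ)`, `s = sin (δk/2)` and `Cx`, `Cz` the constant prefactors of `x` and `z`, the
vertices on the diagonal `m₁ + σ m₂ = k` satisfy `x / (Cx S² s) + σ z / (Cz S² s) = 1`, which is
`sin a cos b + cos a sin b = sin (a + b)` for `a + b = δk/2`. So they lie on one plane, and by
pole–polar duality their polar planes all pass through the pole of that plane.
-/

open Real

theorem polar_planes_pass_through_pole {ι : Type*} {α β γ a b c : ℝ}
    (hα : α ≠ 0) (hβ : β ≠ 0) (hγ : γ ≠ 0) {X Y Z : ι → ℝ}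
    (hplane : ∀ i, a * X i + b * Y i + c * Z i = 1) (i : ι) :
    α * a * X i / α + β * b * Y i / β + γ * c * Z i / γ = 1 := by
  rw [mul_assoc, mul_div_cancel_left₀ _ hα, mul_assoc, mul_div_cancel_left₀ _ hβ, mul_assoc,
    mul_div_cancel_left₀ _ hγ, hplane]

theorem sin_intCast_mul_of_eq_one_or_neg_one {σ : ℤ} (hσ : σ = 1 ∨ σ = -1) (t : ℝ) :
    sin (σ * t) = σ * sin t := by
  rcases hσ with rfl | rfl <;> simp

theorem cos_intCast_mul_of_eq_one_or_neg_one {σ : ℤ} (hσ : σ = 1 ∨ σ = -1) (t : ℝ) :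
    cos (σ * t) = cos t := by
  rcases hσ with rfl | rfl <;> simp

theorem polar_planes_along_discrete_circle_concurrent_general
    (α β γ : ℝ) (hαβ : β < α) (hβγ : γ < β) (hγ : 0 < γ)
    (δ : ℝ) (hδ : δ ∈ Set.Ioo 0 Real.pi)
    (ε : ℝ) (hεdef : ε = 1 / Real.sqrt (Real.cos (δ / 2)))
    (f₁ h₁ f₂ h₂ : ℤ → ℝ)
    (hf₁ : ∀ m : ℤ, f₁ m = ε * Real.sqrt (α - γ) * Real.sin (δ * m / 2))
    (hh₁ : ∀ m : ℤ, h₁ m = ε * Real.sqrt (α - γ) * Real.cos (δ * m / 2))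
    (hf₂ : ∀ m : ℤ, f₂ m = ε * Real.sqrt (α - γ) * Real.cos (δ * m / 2))
    (hh₂ : ∀ m : ℤ, h₂ m = ε * Real.sqrt (α - γ) * Real.sin (δ * m / 2))
    (x y z : ℤ → ℤ → ℝ)
    (hx : ∀ m₁ m₂ : ℤ, x m₁ m₂ = Real.sqrt (α / ((α - β) * (α - γ))) * f₁ m₁ * f₂ m₂)
    (hz : ∀ m₁ m₂ : ℤ, z m₁ m₂ = Real.sqrt (γ / ((α - γ) * (β - γ))) * h₁ m₁ * h₂ m₂)
    (σ : ℤ) (hσ : σ = 1 ∨ σ = -1) (k : ℤ)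
    (hk : Real.sin (δ * k / 2) ≠ 0) :
    ∃ p₁ p₂ p₃ : ℝ, ∀ m : ℤ,
      p₁ * x m (σ * (k - m)) / α + p₂ * y m (σ * (k - m)) / β
        + p₃ * z m (σ * (k - m)) / γ = 1 := by
  have hβ : 0 < β := hγ.trans hβγ
  have hα : 0 < α := hβ.trans hαβ
  have hαβ' : 0 < α - β := sub_pos.2 hαβ
  have hαγ : 0 < α - γ := sub_pos.2 (hβγ.trans hαβ)
  have hβγ' : 0 < β - γ := sub_pos.2 hβγ
  have hcos : 0 < cos (δ / 2) := cos_pos_of_mem_Ioo ⟨by linarith [hδ.1, pi_pos], by linarith [hδ.2]⟩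
  have hε : 0 < ε := by rw [hεdef]; positivity
  set S := ε * sqrt (α - γ)
  set Cx := sqrt (α / ((α - β) * (α - γ)))
  set Cz := sqrt (γ / ((α - γ) * (β - γ)))
  set s := sin (δ * k / 2)
  have hS : S ≠ 0 := by positivity
  have hCx : Cx ≠ 0 := by positivity
  have hCz : Cz ≠ 0 := by positivity
  refine ⟨α * (1 / (Cx * S ^ 2 * s)), β * 0, γ * (σ / (Cz * S ^ 2 * s)),
    polar_planes_pass_through_pole hα.ne' hβ.ne' hγ.ne' fun m => ?_⟩
  have hsin_add : sin (δ * m / 2) * cos (δ * (k - m) / 2)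
      + cos (δ * m / 2) * sin (δ * (k - m) / 2) = s := by
    rw [← sin_add]; congr 1; ring
  have hdiag : δ * ((σ * (k - m) : ℤ) : ℝ) / 2 = σ * (δ * (k - m) / 2) := by push_cast; ring
  rw [hx, hz, hf₁, hf₂, hh₁, hh₂, hdiag, sin_intCast_mul_of_eq_one_or_neg_one hσ,
    cos_intCast_mul_of_eq_one_or_neg_one hσ]
  have hσσ : (σ : ℝ) * σ = 1 := by rcases hσ with rfl | rfl <;> norm_num
  field_simp
  linear_combination hsin_add + cos (δ * m / 2) * sin (δ * (k - m) / 2) * hσσ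

theorem polar_planes_along_discrete_circle_concurrent
    (α β γ : ℝ) (hαβ : β < α) (hβγ : γ < β) (hγ : 0 < γ)
    (δ : ℝ) (hδ : δ ∈ Set.Ioo 0 Real.pi)
    (ε : ℝ) (hεdef : ε = 1 / Real.sqrt (Real.cos (δ / 2)))
    (f₁ h₁ f₂ h₂ : ℤ → ℝ)
    (hf₁ : ∀ m : ℤ, f₁ m = ε * Real.sqrt (α - γ) * Real.sin (δ * m / 2))
    (hh₁ : ∀ m : ℤ, h₁ m = ε * Real.sqrt (α - γ) * Real.cos (δ * m / 2))
    (hf₂ : ∀ m : ℤ, f₂ m = ε * Real.sqrt (α - γ) * Real.cos (δ * m / 2))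
    (hh₂ : ∀ m : ℤ, h₂ m = ε * Real.sqrt (α - γ) * Real.sin (δ * m / 2))
    (g₁ g₂ : ℤ → ℝ)
    (hg₁ : ∀ m : ℤ, g₁ m * g₁ (m + 1) = (α - β) - f₁ m * f₁ (m + 1))
    (hg₂ : ∀ m : ℤ, g₂ m * g₂ (m + 1) = f₂ m * f₂ (m + 1) - (α - β))
    (x y z : ℤ → ℤ → ℝ)
    (hx : ∀ m₁ m₂ : ℤ, x m₁ m₂ = Real.sqrt (α / ((α - β) * (α - γ))) * f₁ m₁ * f₂ m₂)
    (hy : ∀ m₁ m₂ : ℤ, y m₁ m₂ = Real.sqrt (β / ((α - β) * (β - γ))) * g₁ m₁ * g₂ m₂)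
    (hz : ∀ m₁ m₂ : ℤ, z m₁ m₂ = Real.sqrt (γ / ((α - γ) * (β - γ))) * h₁ m₁ * h₂ m₂)
    (σ : ℤ) (hσ : σ = 1 ∨ σ = -1) (k : ℤ)
    (hk : Real.sin (δ * k / 2) ≠ 0) :
    ∃ p₁ p₂ p₃ : ℝ, ∀ m : ℤ,
      p₁ * x m (σ * (k - m)) / α + p₂ * y m (σ * (k - m)) / β
        + p₃ * z m (σ * (k - m)) / γ = 1 :=
  polar_planes_along_discrete_circle_concurrent_general α β γ hαβ hβγ hγ δ hδ ε hεdef f₁ h₁ f₂ h₂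
    hf₁ hh₁ hf₂ hh₂ x y z hx hz σ hσ k hk
end

section
/- Let N₁, N₂ ≥ 1 be integers, set δ = π/(2N₁ + 2N₂ − 1) and q = −cos((4N₁−1)π/(4N₁+4N₂−2))/cos(π/(4N₁+4N₂−2)). Let a > c be reals and set b = (a + c)/2 − q·(a − c)/2 (so that (a − 2b + c)/(a − c) = q). Define f₁(m) = √((a−c)/cos(δ/2))·sin(δm/2) and f₂(m) = √((a−c)/cos(δ/2))·cos(δm/2) for m ∈ ℤ. Then: (A) if g₁ : ℤ → ℝ satisfies g₁(m)g₁(m+1) = (a−b) − f₁(m)f₁(m+1) for all integers m with −2N₁ ≤ m ≤ 2N₁ − 1, then g₁(−2N₁) = 0, g₁(2N₁) = 0, and g₁(m)·g₁(m') > 0 for all integers m, m' with −2N₁ < m, m' < 2N₁ (so g₁ vanishes exactly at the boundary and does not change sign in the interior); and (B) if g₂ : ℤ → ℝ satisfies g₂(m)g₂(m+1) = f₂(m)f₂(m+1) − (a−b) for all integers m with −2N₂ ≤ m ≤ 2N₂ − 1, then g₂(−2N₂) = 0, g₂(2N₂) = 0, and g₂(m)·g₂(m') > 0 for all integers m, m'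 with −2N₂ < m, m' < 2N₂. -/
/-!
By product-to-sum, both right-hand sides equal `C * (cos ((2m+1)δ/2) - cos ((4Nᵢ-1)δ/2))` with
`C = (a - c) / (2 cos (δ/2)) > 0`: `q` is chosen so that `q cos (δ/2) = -cos ((4N₁-1)δ/2)`, and
since `(4N₁ + 4N₂ - 2) δ/2 = π` this is also `cos ((4N₂-1)δ/2)`. As `cos` decreases on `[0, π]`,
this vanishes at `m = -2Nᵢ` and `m = 2Nᵢ - 1` and is positive in between. Positive consecutive
products give `g` a constant strict sign in the interior, and the vanishing products at the two
ends then force `g (±2Nᵢ) = 0`.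
-/

open Real

theorem mul_pos_of_mul_pos_of_mul_pos {α : Type*} [Ring α] [LinearOrder α] [IsStrictOrderedRing α]
    {x y z : α} (hxy : 0 < x * y) (hyz : 0 < y * z) : 0 < x * z := by
  rcases mul_pos_iff.1 hxy with ⟨hx, hy⟩ | ⟨hx, hy⟩ <;>
    rcases mul_pos_iff.1 hyz with ⟨hy', hz⟩ | ⟨hy', hz⟩
  · exact mul_pos hx hz
  · exact absurd hy' (not_lt.2 hy.le)
  · exact absurd hy (not_lt.2 hy'.le)
  · exact mul_pos_of_neg_of_neg hx hz

theorem Int.mul_pos_of_forall_mul_succ_pos {α : Type*} [Ring α] [LinearOrder α]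
    [IsStrictOrderedRing α] {g : ℤ → α} {lo hi : ℤ} (hlohi : lo < hi)
    (hg : ∀ k, lo ≤ k → k < hi → 0 < g k * g (k + 1))
    {m m' : ℤ} (hm : lo ≤ m) (hm' : m' ≤ hi) (hmm' : m ≤ m') : 0 < g m * g m' := by
  induction m', hmm' using Int.leInduction with
  | base =>
    rcases lt_or_eq_of_le hm' with hmhi | rfl
    · exact mul_self_pos.2 (left_ne_zero_of_mul (hg m hm hmhi).ne')
    · have h := hg (m - 1) (by omega) (by omega)
      rw [sub_add_cancel] at h
      exact mul_self_pos.2 (right_ne_zero_of_mul h.ne')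
  | succ k hmk ih =>
    exact mul_pos_of_mul_pos_of_mul_pos (ih (by omega)) (hg k (by omega) (by omega))

theorem eq_zero_and_mul_pos_of_mul_succ_eq {g R : ℤ → ℝ} {n : ℤ} (hn : 2 ≤ n)
    (hg : ∀ m, -n ≤ m → m ≤ n - 1 → g m * g (m + 1) = R m)
    (hR_left : R (-n) = 0) (hR_right : R (n - 1) = 0)
    (hR_pos : ∀ m, -n < m → m < n - 1 → 0 < R m) :
    g (-n) = 0 ∧ g n = 0 ∧
      ∀ m m', -n < m → m < n → -n < m' → m' < n → 0 < g m * g m' := by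
  have interior : ∀ m m', -n < m → m < n → -n < m' → m' < n → m ≤ m' → 0 < g m * g m' :=
    fun m m' hm _ _ hm' hmm' => Int.mul_pos_of_forall_mul_succ_pos (lo := -n + 1) (hi := n - 1)
      (by omega) (fun k hk hk' => (hg k (by omega) (by omega)).symm ▸ hR_pos k (by omega) hk')
      (by omega) (by omega) hmm'
  have ne_zero : ∀ m, -n < m → m < n → g m ≠ 0 := fun m hm hm' =>
    left_ne_zero_of_mul (interior m m hm hm' hm hm' le_rfl).ne'
  refine ⟨?_, ?_, fun m m' hm hm₁ hm' hm'₁ => ?_⟩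
  · have h := hg (-n) le_rfl (by omega)
    rw [hR_left] at h
    exact (mul_eq_zero.1 h).resolve_right (ne_zero _ (by omega) (by omega))
  · have h := hg (n - 1) (by omega) le_rfl
    rw [hR_right, sub_add_cancel] at h
    exact (mul_eq_zero.1 h).resolve_left (ne_zero _ (by omega) (by omega))
  · rcases le_total m m' with hmm' | hm'm
    · exact interior m m' hm hm₁ hm' hm'₁ hmm'
    · exact mul_comm (g m) (g m') ▸ interior m' m hm' hm'₁ hm hm₁ hm'm

theorem cos_odd_mul_lt_cos_odd_mul {t : ℝ} {n m : ℤ} (ht : 0 < t) (hπ : (2 * n - 1) * t ≤ π)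
    (hm : -n < m) (hm' : m < n - 1) : cos ((2 * n - 1) * t) < cos ((2 * m + 1) * t) := by
  have habs : |2 * (m : ℝ) + 1| < 2 * n - 1 := by
    rw [abs_lt]; constructor <;> norm_cast <;> omega
  rw [← cos_abs ((2 * m + 1) * t), abs_mul, abs_of_pos ht]
  exact cos_lt_cos_of_nonneg_of_le_pi (by positivity) hπ (mul_lt_mul_of_pos_right habs ht)

theorem boundary_of_mul_succ_eq_cos_sub_cos {g : ℤ → ℝ} {n : ℤ} {C t : ℝ} (hn : 2 ≤ n)
    (hC : 0 < C) (ht : 0 < t) (hπ : (2 * n - 1) * t ≤ π)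
    (hg : ∀ m, -n ≤ m → m ≤ n - 1 →
      g m * g (m + 1) = C * (cos ((2 * m + 1) * t) - cos ((2 * n - 1) * t))) :
    g (-n) = 0 ∧ g n = 0 ∧
      ∀ m m', -n < m → m < n → -n < m' → m' < n → 0 < g m * g m' := by
  refine eq_zero_and_mul_pos_of_mul_succ_eq hn hg ?_ ?_ fun m hm hm' =>
    mul_pos hC (sub_pos.2 (cos_odd_mul_lt_cos_odd_mul ht hπ hm hm'))
  · rw [show (2 * ((-n : ℤ) : ℝ) + 1) * t = -((2 * n - 1) * t) by push_cast; ring, cos_neg,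
      sub_self, mul_zero]
  · rw [show (2 * ((n - 1 : ℤ) : ℝ) + 1) * t = (2 * n - 1) * t by push_cast; ring, sub_self,
      mul_zero]

theorem sin_mul_sin_add_one (δ x : ℝ) :
    sin (δ * x / 2) * sin (δ * (x + 1) / 2) = (cos (δ / 2) - cos ((2 * x + 1) * (δ / 2))) / 2 := by
  rw [show δ / 2 = δ * (x + 1) / 2 - δ * x / 2 by ring,
    show (2 * x + 1) * (δ * (x + 1) / 2 - δ * x / 2) = δ * (x + 1) / 2 + δ * x / 2 by ring,
    cos_sub, cos_add]
  ring

theorem cos_mul_cos_add_one (δ x : ℝ) :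
    cos (δ * x / 2) * cos (δ * (x + 1) / 2) = (cos (δ / 2) + cos ((2 * x + 1) * (δ / 2))) / 2 := by
  rw [show δ / 2 = δ * (x + 1) / 2 - δ * x / 2 by ring,
    show (2 * x + 1) * (δ * (x + 1) / 2 - δ * x / 2) = δ * (x + 1) / 2 + δ * x / 2 by ring,
    cos_sub, cos_add]
  ring

theorem one_add_mul_div_two_sub_mul_succ_of_sin {f : ℤ → ℝ} {K δ q θ : ℝ} (hK : 0 ≤ K)
    (hcos : 0 < cos (δ / 2)) (hq : q * cos (δ / 2) = -cos θ)
    (hf : ∀ m : ℤ, f m = √(K / cos (δ / 2)) * sin (δ * m / 2)) (m : ℤ) :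
    (1 + q) * K / 2 - f m * f (m + 1) =
      K / (2 * cos (δ / 2)) * (cos ((2 * m + 1) * (δ / 2)) - cos θ) := by
  have hsq := mul_self_sqrt (div_nonneg hK hcos.le)
  rw [hf, hf, mul_mul_mul_comm, hsq, Int.cast_add, Int.cast_one, sin_mul_sin_add_one]
  field_simp
  linear_combination K * hq

theorem mul_succ_sub_one_add_mul_div_two_of_cos {f : ℤ → ℝ} {K δ q θ : ℝ} (hK : 0 ≤ K)
    (hcos : 0 < cos (δ / 2)) (hq : q * cos (δ / 2) = cos θ)
    (hf : ∀ m : ℤ, f m = √(K / cos (δ / 2)) * cos (δ * m / 2)) (m : ℤ) :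
    f m * f (m + 1) - (1 + q) * K / 2 =
      K / (2 * cos (δ / 2)) * (cos ((2 * m + 1) * (δ / 2)) - cos θ) := by
  have hsq := mul_self_sqrt (div_nonneg hK hcos.le)
  rw [hf, hf, mul_mul_mul_comm, hsq, Int.cast_add, Int.cast_one, cos_mul_cos_add_one]
  field_simp
  linear_combination -K * hq

theorem boundary_conditions_for_closed_discrete_ellipsoid
    (N₁ N₂ : ℕ) (hN₁ : 1 ≤ N₁) (hN₂ : 1 ≤ N₂)
    (δ q : ℝ)
    (hδ : δ = Real.pi / (2 * (N₁ : ℝ) + 2 * (N₂ : ℝ) - 1))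
    (hq : q = -(Real.cos ((4 * (N₁ : ℝ) - 1) * Real.pi / (4 * (N₁ : ℝ) + 4 * (N₂ : ℝ) - 2))
        / Real.cos (Real.pi / (4 * (N₁ : ℝ) + 4 * (N₂ : ℝ) - 2))))
    (a c : ℝ) (hac : c < a)
    (b : ℝ) (hb : b = (a + c) / 2 - q * (a - c) / 2)
    (f₁ f₂ : ℤ → ℝ)
    (hf₁ : ∀ m : ℤ, f₁ m = Real.sqrt ((a - c) / Real.cos (δ / 2)) * Real.sin (δ * m / 2))
    (hf₂ : ∀ m : ℤ, f₂ m = Real.sqrt ((a - c) / Real.cos (δ / 2)) * Real.cos (δ * m / 2)) :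
    (∀ g₁ : ℤ → ℝ,
      (∀ m : ℤ, -(2 * (N₁ : ℤ)) ≤ m → m ≤ 2 * (N₁ : ℤ) - 1 →
        g₁ m * g₁ (m + 1) = (a - b) - f₁ m * f₁ (m + 1)) →
      g₁ (-(2 * (N₁ : ℤ))) = 0 ∧ g₁ (2 * (N₁ : ℤ)) = 0 ∧
        ∀ m m' : ℤ, -(2 * (N₁ : ℤ)) < m → m < 2 * (N₁ : ℤ) →
          -(2 * (N₁ : ℤ)) < m' → m' < 2 * (N₁ : ℤ) → 0 < g₁ m * g₁ m') ∧
    (∀ g₂ : ℤ → ℝ,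
      (∀ m : ℤ, -(2 * (N₂ : ℤ)) ≤ m → m ≤ 2 * (N₂ : ℤ) - 1 →
        g₂ m * g₂ (m + 1) = f₂ m * f₂ (m + 1) - (a - b)) →
      g₂ (-(2 * (N₂ : ℤ))) = 0 ∧ g₂ (2 * (N₂ : ℤ)) = 0 ∧
        ∀ m m' : ℤ, -(2 * (N₂ : ℤ)) < m → m < 2 * (N₂ : ℤ) →
          -(2 * (N₂ : ℤ)) < m' → m' < 2 * (N₂ : ℤ) → 0 < g₂ m * g₂ m') := by
  have hN₁' : (1 : ℝ) ≤ N₁ := by exact_mod_cast hN₁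
  have hN₂' : (1 : ℝ) ≤ N₂ := by exact_mod_cast hN₂
  have hS : (4 * (N₁ : ℝ) + 4 * N₂ - 2) * (δ / 2) = π := by
    rw [hδ, div_div, show 4 * (N₁ : ℝ) + 4 * N₂ - 2 = (2 * N₁ + 2 * N₂ - 1) * 2 by ring]
    exact mul_div_cancel₀ _ (by linarith)
  have ht : 0 < δ / 2 := by nlinarith [pi_pos]
  have hcos : 0 < cos (δ / 2) := cos_pos_of_mem_Ioo ⟨by linarith [pi_pos], by nlinarith [pi_pos]⟩
  have hq₁ : q * cos (δ / 2) = -cos ((2 * ((2 * N₁ : ℤ) : ℝ) - 1) * (δ / 2)) := by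
    have hπS : π / (4 * (N₁ : ℝ) + 4 * N₂ - 2) = δ / 2 := by
      rw [← hS]; exact mul_div_cancel_left₀ _ (by linarith)
    rw [hq, mul_div_assoc, hπS, neg_mul, div_mul_cancel₀ _ hcos.ne']
    congr 2; push_cast; ring
  have hq₂ : q * cos (δ / 2) = cos ((2 * ((2 * N₂ : ℤ) : ℝ) - 1) * (δ / 2)) := by
    rw [hq₁, ← cos_pi_sub]; congr 1; push_cast; linear_combination -hS
  have hab : a - b = (1 + q) * (a - c) / 2 := by rw [hb]; ring
  have hC : 0 < (a - c) / (2 * cos (δ / 2)) := div_pos (sub_pos.2 hac) (by positivity)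
  refine ⟨fun g₁ hg₁ => ?_, fun g₂ hg₂ => ?_⟩
  · refine boundary_of_mul_succ_eq_cos_sub_cos (by omega) hC ht (by push_cast; nlinarith)
      fun m hm hm' => ?_
    rw [hg₁ m hm hm', hab, one_add_mul_div_two_sub_mul_succ_of_sin (by linarith) hcos hq₁ hf₁]
  · refine boundary_of_mul_succ_eq_cos_sub_cos (by omega) hC ht (by push_cast; nlinarith)
      fun m hm hm' => ?_
    rw [hg₂ m hm hm', hab, mul_succ_sub_one_add_mul_div_two_of_cos (by linarith) hcos hq₂ hf₂]
end

section
/- Let N₁, N₂ ≥ 1 be integers, set δ = π/(2N₁ + 2N₂ − 1) and q = cos((4N₂−1)π/(4N₁+4N₂−2))/cos(π/(4N₁+4N₂−2)). Then −1 < q < 1 and (1 + q)·cos(δN₁)·sin(δN₂) = (1 − q)·sin(δN₁)·cos(δN₂); equivalently, (1+q)/(1−q) = tan(δN₁)/tan(δN₂). (With (a−2b+c)/(a−c) = q this is the identity (a−b)/(b−c) = tan(δN₁)/tan(δN₂), which shows that the polar planes of the discrete umbilic vertices belong to the families of planes of the circular cross sections, i.e. the apices of the discrete touching cones along the discrete circular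 cross sections lie on the lines through opposite discrete umbilic vertices.) -/
/-!
With `A = δ N₁`, `B = δ N₂` and `ε = π / (4N₁ + 4N₂ - 2)` one has `δ = 2ε`, `A + B = ε + π/2` and
`(4N₂ - 1) ε = π/2 - (A - B)`, so `q = sin (A - B) / sin (A + B)`. Expanding both sines, the
identity becomes `q sin (A + B) = sin (A - B)`, and the bounds on `q` follow from
`sin (A + B) ± sin (A - B) = 2 sin A cos B, 2 cos A sin B > 0` for `A, B ∈ (0, π/2)`.
-/

open Real Set

theorem Real.pi_div_mul_mem_Ioo {x d : ℝ} (hx : 0 < x) (hxd : 2 * x < d) :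
    π / d * x ∈ Ioo 0 (π / 2) := by
  have hd : 0 < d := by linarith
  refine ⟨by positivity, ?_⟩
  rw [div_mul_eq_mul_div, div_lt_div_iff₀ hd two_pos]
  nlinarith [pi_pos]

section Angles

variable {x y : ℝ}

theorem Real.pi_div_mul_add_pi_div_mul (h : 2 * x + 2 * y - 1 ≠ 0) :
    π / (2 * x + 2 * y - 1) * x + π / (2 * x + 2 * y - 1) * y
      = π / (4 * x + 4 * y - 2) + π / 2 := by
  rw [show 4 * x + 4 * y - 2 = 2 * (2 * x + 2 * y - 1) by ring]
  -- `field_simp` clears the denominator only once it is an atom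
  generalize hd : 2 * x + 2 * y - 1 = d at h ⊢
  field_simp
  rw [← hd]
  ring

theorem Real.mul_pi_div_eq_pi_div_two_sub (h : 2 * x + 2 * y - 1 ≠ 0) :
    (4 * y - 1) * π / (4 * x + 4 * y - 2)
      = π / 2 - (π / (2 * x + 2 * y - 1) * x - π / (2 * x + 2 * y - 1) * y) := by
  rw [show 4 * x + 4 * y - 2 = 2 * (2 * x + 2 * y - 1) by ring]
  generalize hd : 2 * x + 2 * y - 1 = d at h ⊢
  field_simp
  rw [← hd]
  ring

end Angles

section SineQuotient

variable {A B q : ℝ}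

theorem Real.one_add_mul_cos_mul_sin_eq (h : q * sin (A + B) = sin (A - B)) :
    (1 + q) * cos A * sin B = (1 - q) * sin A * cos B := by
  rw [sin_add, sin_sub] at h
  linear_combination h

theorem Real.neg_one_lt_and_lt_one_of_mul_sin_add_eq (hA : A ∈ Ioo 0 (π / 2))
    (hB : B ∈ Ioo 0 (π / 2)) (h : q * sin (A + B) = sin (A - B)) : -1 < q ∧ q < 1 := by
  obtain ⟨hA₀, hA₁⟩ := hA
  obtain ⟨hB₀, hB₁⟩ := hB
  have hsinA := sin_pos_of_pos_of_lt_pi hA₀ (by linarith)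
  have hsinB := sin_pos_of_pos_of_lt_pi hB₀ (by linarith)
  have hcosA := cos_pos_of_mem_Ioo ⟨by linarith, hA₁⟩
  have hcosB := cos_pos_of_mem_Ioo ⟨by linarith, hB₁⟩
  have hsum : 0 < sin (A + B) := sin_pos_of_pos_of_lt_pi (by linarith) (by linarith)
  have hplus : (1 + q) * sin (A + B) = 2 * (sin A * cos B) := by
    rw [add_mul, h, sin_add, sin_sub]; ring
  have hminus : (1 - q) * sin (A + B) = 2 * (cos A * sin B) := by
    rw [sub_mul, h, sin_add, sin_sub]; ring
  constructor
  · nlinarith [mul_pos hsinA hcosB]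
  · nlinarith [mul_pos hcosA hsinB]

end SineQuotient

theorem discrete_umbilic_tangent_identity
    (N₁ N₂ : ℕ) (hN₁ : 1 ≤ N₁) (hN₂ : 1 ≤ N₂)
    (δ q : ℝ)
    (hδ : δ = Real.pi / (2 * (N₁ : ℝ) + 2 * (N₂ : ℝ) - 1))
    (hq : q = Real.cos ((4 * (N₂ : ℝ) - 1) * Real.pi / (4 * (N₁ : ℝ) + 4 * (N₂ : ℝ) - 2))
        / Real.cos (Real.pi / (4 * (N₁ : ℝ) + 4 * (N₂ : ℝ) - 2))) :
    (-1 < q ∧ q < 1) ∧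
    (1 + q) * Real.cos (δ * N₁) * Real.sin (δ * N₂)
      = (1 - q) * Real.sin (δ * N₁) * Real.cos (δ * N₂) := by
  have h₁ : (1 : ℝ) ≤ N₁ := by exact_mod_cast hN₁
  have h₂ : (1 : ℝ) ≤ N₂ := by exact_mod_cast hN₂
  have hd : 2 * (N₁ : ℝ) + 2 * N₂ - 1 ≠ 0 := by linarith
  have hA := hδ ▸ pi_div_mul_mem_Ioo (x := N₁) (by positivity) (by linarith)
  have hB := hδ ▸ pi_div_mul_mem_Ioo (x := N₂) (by positivity) (by linarith)
  have hsum : cos (π / (4 * (N₁ : ℝ) + 4 * N₂ - 2)) = sin (δ * N₁ + δ * N₂) := by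
    rw [hδ, pi_div_mul_add_pi_div_mul hd, sin_add_pi_div_two]
  have hdiff : cos ((4 * (N₂ : ℝ) - 1) * π / (4 * N₁ + 4 * N₂ - 2)) = sin (δ * N₁ - δ * N₂) := by
    rw [hδ, mul_pi_div_eq_pi_div_two_sub hd, cos_pi_div_two_sub]
  have hqsin : q * sin (δ * N₁ + δ * N₂) = sin (δ * N₁ - δ * N₂) := by
    have hpos : 0 < sin (δ * N₁ + δ * N₂) :=
      sin_pos_of_pos_of_lt_pi (by linarith [hA.1, hB.1]) (by linarith [hA.2, hB.2])
    rw [hq, hsum, hdiff, div_mul_cancel₀ _ hpos.ne']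
  exact ⟨neg_one_lt_and_lt_one_of_mul_sin_add_eq hA hB hqsin, one_add_mul_cos_mul_sin_eq hqsin⟩
end

section
/- For every real q with −1 < q < 1 and every ε > 0 there exist integers N₁ ≥ 1 and N₂ ≥ 1 such that |cos((4N₂−1)π/(4N₁+4N₂−2)) / cos(π/(4N₁+4N₂−2)) − q| < ε. That is, every admissible shape parameter q = (a−2b+c)/(a−c) ∈ (−1,1) of a classical ellipsoid can be approximated arbitrarily well by the shape parameters realizable by closed discrete ellipsoids. -/
open Real

lemma cos_lip_aux (a b : ℝ) : |Real.cos a - Real.cos b| ≤ |a - b| := by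
  have h1 : |Real.sin ((a + b) / 2)| ≤ 1 := Real.abs_sin_le_one _
  have h2 : |Real.sin ((a - b) / 2)| ≤ |a - b| / 2 := by
    have h := Real.abs_sin_le_abs (x := (a - b) / 2)
    rwa [abs_div, abs_two] at h
  rw [Real.cos_sub_cos, abs_mul, abs_mul]
  have h4 : |(-2:ℝ)| = 2 := by norm_num
  rw [h4]
  nlinarith [abs_nonneg (Real.sin ((a - b) / 2)), abs_nonneg (Real.sin ((a + b) / 2))]

set_option maxHeartbeats 1600000 in
theorem discrete_shape_parameters_dense :
    ∀ q : ℝ, -1 < q → q < 1 → ∀ ε : ℝ, 0 < ε →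
      ∃ N₁ N₂ : ℕ, 1 ≤ N₁ ∧ 1 ≤ N₂ ∧
        |Real.cos ((4 * (N₂ : ℝ) - 1) * Real.pi / (4 * (N₁ : ℝ) + 4 * (N₂ : ℝ) - 2))
            / Real.cos (Real.pi / (4 * (N₁ : ℝ) + 4 * (N₂ : ℝ) - 2)) - q| < ε := by
  intro q hq1 hq2 ε hε
  have hπ : (0:ℝ) < Real.pi := Real.pi_pos
  set t : ℝ := Real.arccos q / Real.pi with ht_def
  have harcpos : 0 < Real.arccos q := Real.arccos_pos.mpr hq2
  have harclt : Real.arccos q < Real.pi := by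
    rcases lt_or_eq_of_le (Real.arccos_le_pi q) with h | h
    · exact h
    · exfalso
      have : Real.cos (Real.arccos q) = q := Real.cos_arccos hq1.le hq2.le
      rw [h, Real.cos_pi] at this
      linarith
  have ht0 : 0 < t := div_pos harcpos hπ
  have ht1 : t < 1 := (div_lt_one hπ).mpr harclt
  have hq : Real.cos (t * Real.pi) = q := by
    rw [ht_def, div_mul_cancel₀ _ (ne_of_gt hπ)]
    exact Real.cos_arccos hq1.le hq2.le
  -- pick S large
  obtain ⟨S, hS⟩ := exists_nat_gt (max (max (2 / (1 - t)) ((38 / ε + 2) / 4)) 2)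
  have hS1 : (S:ℝ) > 2 / (1 - t) := lt_of_le_of_lt (le_max_left _ _ |>.trans (le_max_left _ _)) hS
  have hS2 : (S:ℝ) > (38 / ε + 2) / 4 := lt_of_le_of_lt ((le_max_right _ _).trans (le_max_left _ _)) hS
  have hS3 : (S:ℝ) > 2 := lt_of_le_of_lt (le_max_right _ _) hS
  set D : ℝ := 4 * (S:ℝ) - 2 with hD_def
  have hD6 : (6:ℝ) ≤ D := by simp only [hD_def]; linarith
  have hDpos : (0:ℝ) < D := by linarith
  -- choose k
  set k : ℕ := Nat.floor (t * S) + 1 with hk_def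
  have htS : (0:ℝ) ≤ t * S := by positivity
  have hfl : (Nat.floor (t * (S:ℝ)) : ℝ) ≤ t * S := Nat.floor_le htS
  have hfl2 : t * (S:ℝ) < Nat.floor (t * (S:ℝ)) + 1 := Nat.lt_floor_add_one _
  have hkS : k + 1 ≤ S := by
    have h1t : 0 < 1 - t := by linarith
    have : (2:ℝ) < (S:ℝ) * (1 - t) := by
      rw [gt_iff_lt, div_lt_iff₀ h1t] at hS1; linarith
    have hkreal : ((k:ℝ)) + 1 < (S:ℝ) := by
      have : (k:ℝ) = (Nat.floor (t * (S:ℝ)) : ℝ) + 1 := by exact_mod_cast rfl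
      nlinarith
    have hkn : k + 1 < S := by exact_mod_cast hkreal
    omega
  have hk_le : k ≤ S := by omega
  refine ⟨S - k, k, by omega, by omega, ?_⟩
  have hcast1 : ((S - k : ℕ) : ℝ) = (S:ℝ) - (k:ℝ) := Nat.cast_sub hk_le
  have hden : 4 * ((S - k : ℕ) : ℝ) + 4 * (k:ℝ) - 2 = D := by
    rw [hcast1]; simp only [hD_def]; ring
  rw [hden]
  set θ : ℝ := (4 * (k:ℝ) - 1) * Real.pi / D with hθ_def
  set c : ℝ := Real.cos (Real.pi / D) with hc_def
  -- bound on |θ - tπ|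
  have hkr : (k:ℝ) = (Nat.floor (t * (S:ℝ)) : ℝ) + 1 := by exact_mod_cast rfl
  have h5 : |(4 * (k:ℝ) - 1) - t * D| ≤ 5 := by
    rw [abs_le]
    constructor <;> simp only [hD_def] <;> nlinarith
  have hθt : |θ - t * Real.pi| ≤ 5 * Real.pi / D := by
    have heq : θ - t * Real.pi = ((4 * (k:ℝ) - 1) - t * D) * (Real.pi / D) := by
      simp only [hθ_def]; field_simp
    rw [heq, abs_mul, abs_of_pos (div_pos hπ hDpos)]
    calc |(4 * (k:ℝ) - 1) - t * D| * (Real.pi / D) ≤ 5 * (Real.pi / D) := by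
          apply mul_le_mul_of_nonneg_right h5; positivity
      _ = 5 * Real.pi / D := by ring
  have hB : |Real.cos θ - q| ≤ 5 * Real.pi / D := by
    rw [← hq]
    exact le_trans (cos_lip_aux θ (t * Real.pi)) hθt
  -- denominator bounds
  have hπD_pos : 0 < Real.pi / D := div_pos hπ hDpos
  have hπD_le : Real.pi / D ≤ Real.pi / 3 := by
    gcongr
    linarith
  have hc_half : (1:ℝ)/2 ≤ c := by
    have := Real.cos_le_cos_of_nonneg_of_le_pi hπD_pos.le
      (by linarith [Real.pi_pos] : Real.pi / 3 ≤ Real.pi) hπD_le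
    rw [Real.cos_pi_div_three] at this
    simpa [hc_def] using this
  have hc_pos : 0 < c := by linarith
  have h1c : 1 - c ≤ Real.pi / D := by
    have := cos_lip_aux 0 (Real.pi / D)
    rw [Real.cos_zero] at this
    have h2 : |1 - c| ≤ Real.pi / D := by
      simpa [abs_of_pos hπD_pos] using this
    exact le_trans (le_abs_self _) h2
  have hc1 : c ≤ 1 := Real.cos_le_one _
  have hqabs : |q| ≤ 1 := by rw [abs_le]; constructor <;> linarith
  -- combine
  have hnum : |Real.cos θ - q * c| ≤ 6 * Real.pi / D := by
    have heq : Real.cos θ - q * c = (Real.cos θ - q) + q * (1 - c) := by ring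
    rw [heq]
    calc |(Real.cos θ - q) + q * (1 - c)| ≤ |Real.cos θ - q| + |q * (1 - c)| := abs_add_le _ _
      _ ≤ 5 * Real.pi / D + 1 * (Real.pi / D) := by
          apply add_le_add hB
          rw [abs_mul, abs_of_nonneg (by linarith : (0:ℝ) ≤ 1 - c)]
          apply mul_le_mul hqabs h1c (by linarith) (by norm_num)
      _ = 6 * Real.pi / D := by ring
  have hfinal : |Real.cos θ / c - q| ≤ 12 * Real.pi / D := by
    have heq : Real.cos θ / c - q = (Real.cos θ - q * c) / c := by
      field_simp
    rw [heq, abs_div, abs_of_pos hc_pos]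
    calc |Real.cos θ - q * c| / c ≤ (6 * Real.pi / D) / (1/2) := by
          apply div_le_div₀ (by positivity) hnum (by norm_num) hc_half
      _ = 12 * Real.pi / D := by ring
  have hpi315 : Real.pi < 3.15 := by
    have := Real.pi_lt_d2
    linarith
  have h38 : 12 * Real.pi / D < 38 / D :=
    (div_lt_div_iff_of_pos_right hDpos).mpr (by nlinarith)
  have hεD : 38 / D < ε := by
    rw [div_lt_iff₀ hDpos]
    have hD38 : 38 / ε < D := by
      rw [gt_iff_lt, div_lt_iff₀ (by norm_num : (0:ℝ) < 4)] at hS2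
      simp only [hD_def]; linarith
    rw [div_lt_iff₀ hε] at hD38
    nlinarith
  exact lt_of_le_of_lt hfinal (h38.trans hεD)
end
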